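/- arXiv:2109.05192 — 8 statements merged into one kernel-verified Lean document; each statement's English description precedes it below -/
import Mathlib

section
/- Let $A$ be a C*-algebra, let $a, b \in A_+$, and let $\delta > 0$. If $a \precsim (b - \delta)_+$ (Cuntz subequivalence), then there exists a sequence $(v_n)_{n \in \mathbb{N}}$ in $A$ such that $\|a - v_n b v_n^*\| \to 0$ and $\|v_n\| \leq \|a\|^{1/2} \delta^{-1/2}$ for every $n$. -/
/-!
Write `g(t) = √((t - δ)₊ / t)` (`cutRoot δ`; with `x / 0 = 0` it is continuous and vanishes on
`(-∞, δ]`). Then `g(b) b g(b) = (b - δ)₊` and `δ g(b)² ≤ (b - δ)₊`. If `w (b - δ)₊ w*` approximates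
`a`, the element `v = w g(b)` satisfies `v b v* = w (b - δ)₊ w*` and `δ v v* ≤ w (b - δ)₊ w*`, hence
`‖v‖² ≤ ‖w (b - δ)₊ w*‖ / δ`. Shrinking `v` by a scalar to bring `‖v b v*‖` down to at most `‖a‖`
at most doubles the approximation error and gives `‖v‖² ≤ ‖a‖ / δ`.
-/

open Filter Topology

/-- Cuntz subequivalence `a ≾ b` in a C*-algebra. -/
def CuntzLE {A : Type*} [NonUnitalCStarAlgebra A] (a b : A) : Prop :=
  ∃ v : ℕ → A, Tendsto (fun n => ‖a - v n * b * star (v n)‖) atTop (𝓝 0)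

/-- The cut-down `(a - ε)₊` via continuous functional calculus with `t ↦ max (t - ε) 0`. -/
noncomputable def posCut {A : Type*} [NonUnitalCStarAlgebra A] [PartialOrder A]
    [StarOrderedRing A] (a : A) (ε : ℝ) : A :=
  cfcₙ (fun t : ℝ => max (t - ε) 0) a

noncomputable def cutRoot (δ t : ℝ) : ℝ := √(max (t - δ) 0 / t)

section cutRoot

variable {δ : ℝ}

lemma cutRoot_eq_zero_of_le {t : ℝ} (ht : t ≤ δ) : cutRoot δ t = 0 := by
  simp [cutRoot, max_eq_right (sub_nonpos.mpr ht)]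

lemma continuous_cutRoot (hδ : 0 < δ) : Continuous (cutRoot δ) := by
  refine continuous_iff_continuousAt.mpr fun t => ?_
  rcases lt_or_ge t δ with ht | ht
  · exact EventuallyEq.continuousAt (y := 0) <|
      (eventually_lt_nhds ht).mono fun s hs => cutRoot_eq_zero_of_le hs.le
  · exact Real.continuous_sqrt.continuousAt.comp <|
      ContinuousAt.div (by fun_prop) continuousAt_id (hδ.trans_le ht).ne'

lemma cutRoot_mul_mul_cutRoot (hδ : 0 ≤ δ) (t : ℝ) :
    cutRoot δ t * t * cutRoot δ t = max (t - δ) 0 := by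
  rcases le_or_gt t δ with ht | ht
  · simp [cutRoot_eq_zero_of_le ht, max_eq_right (sub_nonpos.mpr ht)]
  · have ht0 : 0 < t := hδ.trans_lt ht
    rw [mul_right_comm, cutRoot, Real.mul_self_sqrt (div_nonneg (le_max_right _ _) ht0.le),
      div_mul_cancel₀ _ ht0.ne']

lemma mul_cutRoot_mul_cutRoot_le (hδ : 0 ≤ δ) (t : ℝ) :
    δ * (cutRoot δ t * cutRoot δ t) ≤ max (t - δ) 0 := by
  rcases le_or_gt t δ with ht | ht
  · simp [cutRoot_eq_zero_of_le ht]
  · have ht0 : 0 < t := hδ.trans_lt ht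
    rw [cutRoot, Real.mul_self_sqrt (by positivity), max_eq_left (by linarith), mul_div_assoc',
      div_le_iff₀ ht0]
    nlinarith

end cutRoot

lemma exists_smul_norm_le_and_norm_sub_smul_le {E : Type*} [SeminormedAddCommGroup E]
    [NormedSpace ℝ E] (a d : E) :
    ∃ s : ℝ, 0 ≤ s ∧ s * ‖d‖ ≤ ‖a‖ ∧ ‖a - s • d‖ ≤ 2 * ‖a - d‖ := by
  rcases le_or_gt ‖d‖ ‖a‖ with hda | hda
  · exact ⟨1, zero_le_one, by simpa, by simp; linarith [norm_nonneg (a - d)]⟩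
  have hd : 0 < ‖d‖ := (norm_nonneg a).trans_lt hda
  refine ⟨‖a‖ / ‖d‖, by positivity, (div_mul_cancel₀ _ hd.ne').le, ?_⟩
  have hrest : ‖(1 - ‖a‖ / ‖d‖) • d‖ = ‖d‖ - ‖a‖ := by
    rw [norm_smul, Real.norm_of_nonneg (sub_nonneg.mpr ((div_le_one hd).mpr hda.le)), sub_mul,
      one_mul, div_mul_cancel₀ _ hd.ne']
  calc ‖a - (‖a‖ / ‖d‖) • d‖ = ‖(a - d) + (1 - ‖a‖ / ‖d‖) • d‖ := by
        rw [sub_smul, one_smul]; abel_nf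
    _ ≤ ‖a - d‖ + (‖d‖ - ‖a‖) := hrest ▸ norm_add_le _ _
    _ ≤ 2 * ‖a - d‖ := by linarith [norm_sub_norm_le d a, norm_sub_rev d a]

section CStarAlgebra

variable {A : Type*} [NonUnitalCStarAlgebra A] [PartialOrder A] [StarOrderedRing A] {b : A} {δ : ℝ}

lemma cfcₙ_cutRoot_mul_mul_cfcₙ_cutRoot (hb : IsSelfAdjoint b) (hδ : 0 < δ) :
    cfcₙ (cutRoot δ) b * b * cfcₙ (cutRoot δ) b = posCut b δ := by
  have hg : ContinuousOn (cutRoot δ) (quasispectrum ℝ b) := (continuous_cutRoot hδ).continuousOn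
  have hg0 : cutRoot δ 0 = 0 := cutRoot_eq_zero_of_le hδ.le
  rw [posCut, ← funext (cutRoot_mul_mul_cutRoot hδ.le),
    cfcₙ_mul (fun t => cutRoot δ t * t) _ b (hg.mul continuousOn_id) (by simp [hg0]) hg hg0,
    cfcₙ_mul _ (fun t => t) b hg hg0, cfcₙ_id' ℝ b]

lemma smul_cfcₙ_cutRoot_mul_self_le (hδ : 0 < δ) :
    δ • (cfcₙ (cutRoot δ) b * cfcₙ (cutRoot δ) b) ≤ posCut b δ := by
  have hg : ContinuousOn (cutRoot δ) (quasispectrum ℝ b) := (continuous_cutRoot hδ).continuousOn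
  have hg0 : cutRoot δ 0 = 0 := cutRoot_eq_zero_of_le hδ.le
  rw [← cfcₙ_mul _ _ b hg hg0 hg hg0,
    ← cfcₙ_const_mul δ (fun t => cutRoot δ t * cutRoot δ t) b (hg.mul hg) (by simp [hg0])]
  exact cfcₙ_mono (hg0 := by simp [hδ.le]) fun t _ => mul_cutRoot_mul_cutRoot_le hδ.le t

lemma norm_sq_le_of_smul_mul_star_le {v d : A} (hδ : 0 < δ) (h : δ • (v * star v) ≤ d) :
    ‖v‖ ^ 2 ≤ ‖d‖ / δ := by
  rw [le_div_iff₀ hδ]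
  calc ‖v‖ ^ 2 * δ = ‖δ • (v * star v)‖ := by
        rw [norm_smul, CStarRing.norm_self_mul_star, Real.norm_of_nonneg hδ.le, sq, mul_comm]
    _ ≤ ‖d‖ := CStarAlgebra.norm_le_norm_of_nonneg_of_le
        (smul_nonneg hδ.le (mul_star_self_nonneg v)) h

lemma exists_bounded_conj_of_conj_posCut (hb : IsSelfAdjoint b) (hδ : 0 < δ) (a w : A) :
    ∃ v : A, ‖a - v * b * star v‖ ≤ 2 * ‖a - w * posCut b δ * star w‖ ∧
      ‖v‖ ≤ √‖a‖ / √δ := by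
  set g := cfcₙ (cutRoot δ) b
  have hg : star g = g := IsSelfAdjoint.cfcₙ.star_eq
  have hconj : w * g * b * star (w * g) = w * posCut b δ * star w := by
    rw [star_mul, hg, ← cfcₙ_cutRoot_mul_mul_cfcₙ_cutRoot hb hδ]; noncomm_ring
  have hle : δ • (w * g * star (w * g)) ≤ w * posCut b δ * star w := by
    have hmul : w * g * star (w * g) = w * (g * g) * star w := by
      rw [star_mul, hg]; noncomm_ring
    rw [hmul, ← smul_mul_assoc, ← mul_smul_comm]
    exact star_right_conjugate_le_conjugate (smul_cfcₙ_cutRoot_mul_self_le hδ) w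
  set d := w * posCut b δ * star w
  obtain ⟨s, hs0, hsd, hs⟩ := exists_smul_norm_le_and_norm_sub_smul_le a d
  refine ⟨√s • (w * g), ?_, ?_⟩
  · have hscale : √s • (w * g) * b * star (√s • (w * g)) = s • d := by
      rw [star_smul, star_trivial, smul_mul_assoc, smul_mul_assoc, mul_smul_comm, smul_smul,
        Real.mul_self_sqrt hs0, hconj]
    rwa [hscale]
  · rw [← Real.sqrt_div (norm_nonneg a), Real.le_sqrt (norm_nonneg _) (by positivity)]
    calc ‖√s • (w * g)‖ ^ 2 = s * ‖w * g‖ ^ 2 := by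
          rw [norm_smul, mul_pow, Real.norm_of_nonneg (Real.sqrt_nonneg _), Real.sq_sqrt hs0]
      _ ≤ s * (‖d‖ / δ) := by gcongr; exact norm_sq_le_of_smul_mul_star_le hδ hle
      _ ≤ ‖a‖ / δ := by rw [← mul_div_assoc]; gcongr

end CStarAlgebra

theorem stmt_0_general {A : Type*} [NonUnitalCStarAlgebra A] [PartialOrder A] [StarOrderedRing A]
    (a b : A) (hb : 0 ≤ b) (δ : ℝ) (hδ : 0 < δ)
    (h : CuntzLE a (posCut b δ)) :
    ∃ v : ℕ → A, Tendsto (fun n => ‖a - v n * b * star (v n)‖) atTop (𝓝 0) ∧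
      ∀ n, ‖v n‖ ≤ Real.sqrt ‖a‖ / Real.sqrt δ := by
  obtain ⟨w, hw⟩ := h
  choose v hv hv_norm using fun n => exists_bounded_conj_of_conj_posCut hb.isSelfAdjoint hδ a (w n)
  refine ⟨v, squeeze_zero (fun _ => norm_nonneg _) hv ?_, hv_norm⟩
  simpa using hw.const_mul 2

/-- If `a ≾ (b - δ)₊` then the witnessing sequence can be chosen with
`‖v n‖ ≤ ‖a‖^(1/2) δ^(-1/2)`. -/
theorem stmt_0 {A : Type*} [NonUnitalCStarAlgebra A] [PartialOrder A] [StarOrderedRing A]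
    (a b : A) (ha : 0 ≤ a) (hb : 0 ≤ b) (δ : ℝ) (hδ : 0 < δ)
    (h : CuntzLE a (posCut b δ)) :
    ∃ v : ℕ → A, Tendsto (fun n => ‖a - v n * b * star (v n)‖) atTop (𝓝 0) ∧
      ∀ n, ‖v n‖ ≤ Real.sqrt ‖a‖ / Real.sqrt δ :=
  stmt_0_general a b hb δ hδ h
end

section
/- Let $A$ be a C*-algebra, let $x \in A$ be nonzero, and let $b \in A_+$. Then for any $\varepsilon > 0$, one has $(x b x^* - \varepsilon)_+ \precsim x (b - \varepsilon/\|x\|^2)_+ x^* \precsim (b - \varepsilon/\|x\|^2)_+$ in the Cuntz subequivalence order. -/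
/-!
With `δ = ε / ‖x‖²` one has `‖b - (b - δ)₊‖ ≤ δ`, so `a = x b x*` lies within `ε` of
`y = x (b - δ)₊ x*`, and the first relation is an instance of Rørdam's lemma
`‖a - y‖ ≤ ε → (a - ε)₊ ≾ y`. For that, let `e = φ(a)` with `φ` a continuous cutoff vanishing on
`(-∞, ε]` and equal to `1` from `ε + θ` on. Then `e (a - ε) e` is within `θ` of `(a - ε)₊`, is
positive, and lies below `e y e` because `e (a - y) e ≤ ε e²`. A positive element is Cuntz below
every element above it, `e y e ≾ y`, and `{a | a ≾ y}` is closed. The second relation is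
conjugation by `x`.
-/

open Filter Topology

theorem mul_one_sub_sq_div_sq_le {δ t : ℝ} (hδ : 0 < δ) (ht : 0 ≤ t) :
    t * (1 - t ^ 2 / (δ + t) ^ 2) ^ 2 ≤ δ := by
  have hδt : 0 < δ + t := by linarith
  have h : 1 - t ^ 2 / (δ + t) ^ 2 = δ * (δ + 2 * t) / (δ + t) ^ 2 := by
    field_simp; ring
  rw [h, div_pow, mul_div_assoc', div_le_iff₀ (by positivity)]
  nlinarith [mul_nonneg (mul_nonneg hδ.le ht) (mul_nonneg hδ.le ht), pow_pos hδ 4,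
    mul_nonneg (pow_pos hδ 3).le ht, pow_nonneg ht 4, mul_nonneg hδ.le ht]

noncomputable def cutoff (ε θ t : ℝ) : ℝ := min 1 (max (t - ε) 0 / θ)

theorem continuous_cutoff (ε θ : ℝ) : Continuous (cutoff ε θ) := by
  unfold cutoff; fun_prop

theorem cutoff_zero {ε : ℝ} (hε : 0 ≤ ε) (θ : ℝ) : cutoff ε θ 0 = 0 := by
  simp [cutoff, hε]

theorem cutoff_eq_zero {ε θ t : ℝ} (ht : t ≤ ε) : cutoff ε θ t = 0 := by
  simp [cutoff, ht]

theorem cutoff_sq_mul_sub_nonneg (ε θ t : ℝ) : 0 ≤ cutoff ε θ t ^ 2 * (t - ε) := by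
  rcases le_total t ε with h | h
  · simp [cutoff_eq_zero h]
  · exact mul_nonneg (sq_nonneg _) (sub_nonneg.mpr h)

theorem abs_max_sub_cutoff_sq_mul_le {ε θ : ℝ} (hθ : 0 < θ) (t : ℝ) :
    |max (t - ε) 0 - cutoff ε θ t ^ 2 * (t - ε)| ≤ θ := by
  rcases le_total t ε with h | h
  · simp [cutoff_eq_zero h, h, hθ.le]
  rw [max_eq_left (sub_nonneg.mpr h)]
  rcases le_total θ (t - ε) with h' | h'
  · have : cutoff ε θ t = 1 := min_eq_left ((one_le_div hθ).mpr (le_max_of_le_left h'))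
    simp [this, hθ.le]
  have h0 : 0 ≤ cutoff ε θ t := le_min zero_le_one (by positivity)
  have h1 : cutoff ε θ t ^ 2 ≤ 1 := pow_le_one₀ h0 (min_le_left _ _)
  rw [abs_le]
  constructor <;>
    nlinarith [mul_nonneg (sub_nonneg.mpr h1) (sub_nonneg.mpr h), sq_nonneg (cutoff ε θ t)]

section

variable {A : Type*} [NonUnitalCStarAlgebra A] {a b c : A}

theorem cuntzLE_iff_forall_exists_norm_sub_le :
    CuntzLE a b ↔ ∀ η > 0, ∃ v : A, ‖a - v * b * star v‖ ≤ η := by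
  constructor
  · rintro ⟨v, hv⟩ η hη
    obtain ⟨n, hn⟩ := (hv.eventually (ge_mem_nhds hη)).exists
    exact ⟨v n, hn⟩
  · intro h
    choose v hv using fun n : ℕ => h (1 / (n + 1)) Nat.one_div_pos_of_nat
    exact ⟨v, squeeze_zero (fun n => norm_nonneg _) hv tendsto_one_div_add_atTop_nhds_zero_nat⟩

theorem cuntzLE_mul_mul_star (x b : A) : CuntzLE (x * b * star x) b :=
  ⟨fun _ => x, by simp⟩

theorem norm_mul_mul_star_le (v d : A) : ‖v * d * star v‖ ≤ ‖v‖ ^ 2 * ‖d‖ :=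
  calc ‖v * d * star v‖ ≤ ‖v‖ * ‖d‖ * ‖star v‖ := norm_mul₃_le
    _ = ‖v‖ ^ 2 * ‖d‖ := by rw [norm_star]; ring

theorem CuntzLE.trans (hab : CuntzLE a b) (hbc : CuntzLE b c) : CuntzLE a c := by
  rw [cuntzLE_iff_forall_exists_norm_sub_le] at *
  intro η hη
  obtain ⟨v, hv⟩ := hab (η / 2) (by positivity)
  obtain ⟨w, hw⟩ := hbc (η / 2 / (‖v‖ ^ 2 + 1)) (by positivity)
  refine ⟨v * w, ?_⟩
  have hsplit : a - v * w * c * star (v * w)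
      = (a - v * b * star v) + v * (b - w * c * star w) * star v := by
    rw [star_mul]; noncomm_ring
  have hconj : ‖v‖ ^ 2 * ‖b - w * c * star w‖ ≤ η / 2 :=
    calc ‖v‖ ^ 2 * ‖b - w * c * star w‖ ≤ (‖v‖ ^ 2 + 1) * (η / 2 / (‖v‖ ^ 2 + 1)) := by
          gcongr; linarith
      _ = η / 2 := by field_simp
  calc ‖a - v * w * c * star (v * w)‖
      ≤ ‖a - v * b * star v‖ + ‖v * (b - w * c * star w) * star v‖ := by
        rw [hsplit]; exact norm_add_le _ _
    _ ≤ η / 2 + η / 2 := add_le_add hv ((norm_mul_mul_star_le _ _).trans hconj)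
    _ = η := add_halves η

theorem isClosed_setOf_cuntzLE (b : A) : IsClosed {a : A | CuntzLE a b} := by
  refine isClosed_of_closure_subset fun a ha => ?_
  rw [Set.mem_ofPred_eq, cuntzLE_iff_forall_exists_norm_sub_le]
  intro η hη
  obtain ⟨a', hab, ha'⟩ := Metric.mem_closure_iff.mp ha (η / 2) (by positivity)
  obtain ⟨v, hv⟩ := cuntzLE_iff_forall_exists_norm_sub_le.mp hab (η / 2) (by positivity)
  refine ⟨v, ?_⟩
  rw [dist_eq_norm] at ha'
  calc ‖a - v * b * star v‖ ≤ ‖a - a'‖ + ‖a' - v * b * star v‖ :=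
        norm_sub_le_norm_sub_add_norm_sub _ _ _
    _ ≤ η := by linarith

theorem cfcₙ_mul_id_mul_self {f : ℝ → ℝ} {a : A} (ha : IsSelfAdjoint a)
    (hf : ContinuousOn f (quasispectrum ℝ a)) (hf0 : f 0 = 0) :
    cfcₙ (fun t => f t * t * f t) a = cfcₙ f a * a * cfcₙ f a := by
  rw [cfcₙ_mul (fun t => f t * t) f a (hf.mul continuousOn_id) (by simp) hf hf0,
    cfcₙ_mul f (fun t => t) a hf hf0, cfcₙ_id' ℝ a]

-- `(1 - k) a (1 - k)`, written out since `A` need not be unital.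
def conjOneSub (k a : A) : A := a - k * a - a * k + k * a * k

theorem star_sub_mul_mul_sub_mul {r k : A} (hr : IsSelfAdjoint r) (hk : IsSelfAdjoint k) :
    star (r - r * k) * (r - r * k) = conjOneSub k (r * r) := by
  rw [star_sub, star_mul, hr.star_eq, hk.star_eq, conjOneSub]
  noncomm_ring

theorem conjOneSub_cfcₙ {f : ℝ → ℝ} {a : A} (ha : IsSelfAdjoint a)
    (hf : ContinuousOn f (quasispectrum ℝ a)) (hf0 : f 0 = 0) :
    conjOneSub (cfcₙ f a) a = cfcₙ (fun t => t * (1 - f t) ^ 2) a := by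
  calc conjOneSub (cfcₙ f a) a
      = cfcₙ (fun t => t - f t * t - t * f t + f t * t * f t) a := by
        rw [cfcₙ_add (fun t => t - f t * t - t * f t) (fun t => f t * t * f t) a,
          cfcₙ_sub (fun t => t - f t * t) (fun t => t * f t) a,
          cfcₙ_sub (fun t => t) (fun t => f t * t) a,
          cfcₙ_mul_id_mul_self ha hf hf0, cfcₙ_mul f (fun t => t) a hf hf0,
          cfcₙ_mul (fun t => t) f a, cfcₙ_id' ℝ a, conjOneSub]
    _ = cfcₙ (fun t => t * (1 - f t) ^ 2) a := by congr 1; ext t; ring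

end

section Order

variable {A : Type*} [NonUnitalCStarAlgebra A] [PartialOrder A] [StarOrderedRing A]

theorem norm_sub_posCut_le {b : A} (hb : 0 ≤ b) {δ : ℝ} (hδ : 0 ≤ δ) :
    ‖b - posCut b δ‖ ≤ δ := by
  have : b - posCut b δ = cfcₙ (fun t : ℝ => t - max (t - δ) 0) b := by
    rw [cfcₙ_sub _ _ b (by fun_prop) rfl (by fun_prop) (by simp [hδ]), cfcₙ_id' ℝ b]
    rfl
  rw [this]
  refine norm_cfcₙ_le fun t ht => ?_
  have ht0 : 0 ≤ t := quasispectrum_nonneg_of_nonneg b hb t ht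
  rw [Real.norm_eq_abs, abs_le]
  constructor <;> cases max_cases (t - δ) 0 <;> linarith

theorem conjOneSub_mono {z w k : A} (hzw : z ≤ w) (hk : IsSelfAdjoint k) :
    conjOneSub k z ≤ conjOneSub k w := by
  set r := CFC.sqrt (w - z)
  have hr : IsSelfAdjoint r := .of_nonneg (CFC.sqrt_nonneg _)
  have hdiff : conjOneSub k w - conjOneSub k z = star (r - r * k) * (r - r * k) := by
    rw [star_sub_mul_mul_sub_mul hr hk, CFC.sqrt_mul_sqrt_self _ (sub_nonneg.mpr hzw),
      conjOneSub, conjOneSub, conjOneSub]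
    noncomm_ring
  rw [← sub_nonneg, hdiff]
  exact star_mul_self_nonneg _

theorem norm_conjOneSub_le {w k : A} (hw : 0 ≤ w) {δ : ℝ} (hδ : 0 < δ)
    (hk : k = cfcₙ (fun t : ℝ => √t / (δ + |t|)) w) :
    ‖conjOneSub (k * w * k) w‖ ≤ δ := by
  have hw' : IsSelfAdjoint w := .of_nonneg hw
  have hs : Continuous fun t : ℝ => √t / (δ + |t|) :=
    Real.continuous_sqrt.div (by fun_prop) fun t => by positivity
  rw [hk, ← cfcₙ_mul_id_mul_self hw' hs.continuousOn (by simp),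
    conjOneSub_cfcₙ hw' (by fun_prop) (by simp)]
  refine norm_cfcₙ_le fun t ht => ?_
  have ht0 : 0 ≤ t := quasispectrum_nonneg_of_nonneg w hw t ht
  have hst : √t / (δ + |t|) * t * (√t / (δ + |t|)) = t ^ 2 / (δ + t) ^ 2 := by
    rw [abs_of_nonneg ht0, div_mul_eq_mul_div, div_mul_div_comm, mul_comm (√t) t, mul_assoc,
      Real.mul_self_sqrt ht0]
    ring
  rw [hst, Real.norm_of_nonneg (by positivity)]
  exact mul_one_sub_sq_div_sq_le hδ ht0

-- `v = z^{1/2} k` with `k = w^{1/2} (c² + w)⁻¹` works: `v w v* = z^{1/2} (k w k) z^{1/2}`, and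
-- `‖z^{1/2} (1 - k w k)‖² ≤ ‖(1 - k w k) w (1 - k w k)‖ ≤ c²` because `z ≤ w`.
theorem cuntzLE_of_le {z w : A} (hz : 0 ≤ z) (hzw : z ≤ w) : CuntzLE z w := by
  have hw : 0 ≤ w := hz.trans hzw
  rw [cuntzLE_iff_forall_exists_norm_sub_le]
  intro η hη
  set r := CFC.sqrt z
  have hr : IsSelfAdjoint r := .of_nonneg (CFC.sqrt_nonneg z)
  have hrr : r * r = z := CFC.sqrt_mul_sqrt_self z hz
  obtain ⟨c, hc, hcη⟩ : ∃ c > 0, (‖r‖ + 1) * c = η :=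
    ⟨η / (‖r‖ + 1), by positivity, by field_simp⟩
  set k := cfcₙ (fun t : ℝ => √t / (c ^ 2 + |t|)) w with hk_def
  have hk : IsSelfAdjoint k := cfcₙ_predicate _ w
  have hkwk : IsSelfAdjoint (k * w * k) := by
    simpa [hk.star_eq] using (IsSelfAdjoint.of_nonneg hw).conjugate k
  set q := r - r * (k * w * k)
  have hq : ‖q‖ ≤ c := by
    have hle : star q * q ≤ conjOneSub (k * w * k) w := by
      rw [star_sub_mul_mul_sub_mul hr hkwk, hrr]
      exact conjOneSub_mono hzw hkwk
    have hnorm := (CStarAlgebra.norm_le_norm_of_nonneg_of_le (star_mul_self_nonneg q) hle).trans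
      (norm_conjOneSub_le hw (by positivity) hk_def)
    rw [CStarRing.norm_star_mul_self] at hnorm
    nlinarith [norm_nonneg q]
  refine ⟨r * k, ?_⟩
  have hrq : z - r * k * w * star (r * k) = r * star q := by
    rw [star_sub, star_mul, star_mul, hr.star_eq, hk.star_eq, hkwk.star_eq, ← hrr]
    noncomm_ring
  calc ‖z - r * k * w * star (r * k)‖ = ‖r * star q‖ := by rw [hrq]
    _ ≤ ‖r‖ * c := (norm_mul_le _ _).trans (by rw [norm_star]; gcongr)
    _ ≤ η := by rw [← hcη]; nlinarith

theorem conj_sub_smul_le_conj_of_norm_sub_le {a y e : A} (ha : IsSelfAdjoint a)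
    (hy : IsSelfAdjoint y) (he : IsSelfAdjoint e) {ε : ℝ} (h : ‖a - y‖ ≤ ε) :
    e * a * e - ε • (e * e) ≤ e * y * e := by
  have hconj : e * (a - y) * e ≤ ‖a - y‖ • (e * e) := by
    simpa [he.star_eq] using CStarAlgebra.star_left_conjugate_le_norm_smul (a := e) (ha.sub hy)
  have hscale : ‖a - y‖ • (e * e) ≤ ε • (e * e) :=
    smul_le_smul_of_nonneg_right h (by simpa [he.star_eq] using star_mul_self_nonneg e)
  rw [sub_le_iff_le_add, ← sub_le_iff_le_add', ← sub_mul, ← mul_sub]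
  exact hconj.trans hscale

theorem posCut_cuntzLE_of_norm_sub_le {a y : A} (ha : IsSelfAdjoint a) (hy : IsSelfAdjoint y)
    {ε : ℝ} (h : ‖a - y‖ ≤ ε) : CuntzLE (posCut a ε) y := by
  have hε : 0 ≤ ε := (norm_nonneg _).trans h
  refine (isClosed_setOf_cuntzLE y).closure_subset (Metric.mem_closure_iff.mpr fun η hη => ?_)
  set θ := η / 2
  have hθ : 0 < θ := by positivity
  set e := cfcₙ (cutoff ε θ) a
  have he : IsSelfAdjoint e := cfcₙ_predicate _ a
  have hφ := (continuous_cutoff ε θ).continuousOn (s := quasispectrum ℝ a)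
  have hφ0 := cutoff_zero hε θ
  have hz : cfcₙ (fun t => cutoff ε θ t ^ 2 * (t - ε)) a = e * a * e - ε • (e * e) := by
    calc cfcₙ (fun t => cutoff ε θ t ^ 2 * (t - ε)) a
        = cfcₙ (fun t => cutoff ε θ t * t * cutoff ε θ t
            - ε * (cutoff ε θ t * cutoff ε θ t)) a := by congr 1; ext t; ring
      _ = e * a * e - ε • (e * e) := by
        rw [cfcₙ_sub (fun t => cutoff ε θ t * t * cutoff ε θ t)
            (fun t => ε * (cutoff ε θ t * cutoff ε θ t)) a,
          cfcₙ_mul_id_mul_self ha hφ hφ0, cfcₙ_const_mul ε (fun t => cutoff ε θ t * cutoff ε θ t) a,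
          cfcₙ_mul (cutoff ε θ) (cutoff ε θ) a]
  refine ⟨e * a * e - ε • (e * e), ?_, ?_⟩
  · have hz0 : 0 ≤ e * a * e - ε • (e * e) :=
      hz ▸ cfcₙ_nonneg fun t _ => cutoff_sq_mul_sub_nonneg ε θ t
    exact (cuntzLE_of_le hz0 (conj_sub_smul_le_conj_of_norm_sub_le ha hy he h)).trans
      (by simpa [he.star_eq] using cuntzLE_mul_mul_star e y)
  · rw [dist_eq_norm, ← hz, posCut, ← cfcₙ_sub (fun t => max (t - ε) 0) _ a (by fun_prop)
      (by simp [hε])]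
    exact (norm_cfcₙ_le fun t _ => abs_max_sub_cutoff_sq_mul_le hθ t).trans_lt (half_lt_self hη)

end Order

theorem stmt_1_general {A : Type*} [NonUnitalCStarAlgebra A] [PartialOrder A] [StarOrderedRing A]
    (x : A) (b : A) (hb : 0 ≤ b) (ε : ℝ) (hε : 0 < ε) :
    CuntzLE (posCut (x * b * star x) ε) (x * posCut b (ε / ‖x‖ ^ 2) * star x) ∧
      CuntzLE (x * posCut b (ε / ‖x‖ ^ 2) * star x) (posCut b (ε / ‖x‖ ^ 2)) := by
  set δ := ε / ‖x‖ ^ 2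
  have hδ : 0 ≤ δ := by positivity
  have hcut : IsSelfAdjoint (posCut b δ) := cfcₙ_predicate _ b
  refine ⟨posCut_cuntzLE_of_norm_sub_le ((IsSelfAdjoint.of_nonneg hb).conjugate x)
    (hcut.conjugate x) ?_, cuntzLE_mul_mul_star x _⟩
  calc ‖x * b * star x - x * posCut b δ * star x‖ = ‖x * (b - posCut b δ) * star x‖ := by
        rw [mul_sub, sub_mul]
    _ ≤ ‖x‖ ^ 2 * δ := (norm_mul_mul_star_le _ _).trans (by gcongr; exact norm_sub_posCut_le hb hδ)
    _ ≤ ε := by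
      rcases eq_or_ne ‖x‖ 0 with hx | hx
      · simp [hx, hε.le]
      · rw [mul_div_cancel₀ _ (by positivity)]

/-- For nonzero `x` and positive `b`:
`(x b x* - ε)₊ ≾ x (b - ε/‖x‖²)₊ x* ≾ (b - ε/‖x‖²)₊`. -/
theorem stmt_1 {A : Type*} [NonUnitalCStarAlgebra A] [PartialOrder A] [StarOrderedRing A]
    (x : A) (hx : x ≠ 0) (b : A) (hb : 0 ≤ b) (ε : ℝ) (hε : 0 < ε) :
    CuntzLE (posCut (x * b * star x) ε) (x * posCut b (ε / ‖x‖ ^ 2) * star x) ∧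
      CuntzLE (x * posCut b (ε / ‖x‖ ^ 2) * star x) (posCut b (ε / ‖x‖ ^ 2)) :=
  stmt_1_general x b hb ε hε
end

section
/- Let $A$ be a C*-algebra, let $K \subseteq \mathbb{C}$ be compact, and let $f : K \to \mathbb{C}$ be continuous. Let $S$ be the set of normal elements $x$ of the multiplier algebra $M(A)$ with spectrum contained in $K$. Then the functional calculus map $x \mapsto f(x)$ from $S$ to $M(A)$ is continuous with respect to the strict topology: if a net $(x_i)$ in $S$ converges strictly to $x \in S$, then $f(x_i) \to f(x)$ strictly. -/
/-!
For star homomorphisms `Φ i, Ψ : C(K, ℂ) → 𝓜(A)`, the functions `g` with `Φ i g → Ψ g` strictly form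
a star subalgebra: strict convergence survives sums, adjoints and products of norm-bounded nets,
and star homomorphisms between C⋆-algebras are contractive. Contractivity also makes this
subalgebra closed in the sup norm. Taking `Φ i = cfcHomSuperset (x i)` and `Ψ = cfcHomSuperset y`,
it contains the identity function, which generates `C(K, ℂ)` as a C⋆-algebra by Stone–Weierstrass.
-/

open Filter Topology

open scoped MultiplierAlgebra

/-- A net in the multiplier algebra `M(A)` converges strictly to `y` if multiplication against
every element of `A` converges in norm on both sides. -/
def StrictTendsto {A : Type*} [NonUnitalCStarAlgebra A] {ι : Type*} (l : Filter ι)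
    (x : ι → 𝓜(ℂ, A)) (y : 𝓜(ℂ, A)) : Prop :=
  ∀ a : A, Tendsto (fun i => x i * (a : 𝓜(ℂ, A))) l (𝓝 (y * (a : 𝓜(ℂ, A)))) ∧
    Tendsto (fun i => (a : 𝓜(ℂ, A)) * x i) l (𝓝 ((a : 𝓜(ℂ, A)) * y))

lemma CStarRing.eq_of_forall_mul_left {A : Type*} [NonUnitalNormedRing A] [StarRing A]
    [CStarRing A] {u v : A} (h : ∀ z : A, z * u = z * v) : u = v := by
  have h0 : star (u - v) * (u - v) = 0 := by rw [mul_sub, h, sub_self]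
  exact sub_eq_zero.mp ((CStarRing.star_mul_self_eq_zero_iff _).mp h0)

lemma DoubleCentralizer.coe_star {A : Type*} [NonUnitalCStarAlgebra A] (a : A) :
    ((star a : A) : 𝓜(ℂ, A)) = star (a : 𝓜(ℂ, A)) :=
  map_star (DoubleCentralizer.coeHom (𝕜 := ℂ) (A := A)) a

lemma DoubleCentralizer.mul_coe {𝕜 A : Type*} [NontriviallyNormedField 𝕜] [NonUnitalNormedRing A]
    [StarRing A] [CStarRing A] [NormedSpace 𝕜 A] [SMulCommClass 𝕜 A A] [IsScalarTower 𝕜 A A]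
    (m : 𝓜(𝕜, A)) (a : A) : m * (a : 𝓜(𝕜, A)) = (m.fst a : 𝓜(𝕜, A)) := by
  ext b
  · show m.fst (a * b) = m.fst a * b
    refine CStarRing.eq_of_forall_mul_left fun z => ?_
    rw [← m.central, ← mul_assoc, m.central, mul_assoc]
  · show m.snd b * a = b * m.fst a
    exact m.central b a

lemma Metric.tendsto_of_forall_approx {E ι : Type*} [PseudoMetricSpace E] {l : Filter ι}
    {f : ι → E} {y : E}
    (h : ∀ ε > 0, ∃ g : ι → E, ∃ z, Tendsto g l (𝓝 z) ∧ (∀ i, dist (f i) (g i) ≤ ε) ∧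
      dist z y ≤ ε) :
    Tendsto f l (𝓝 y) := by
  refine Metric.tendsto_nhds.mpr fun ε hε => ?_
  obtain ⟨g, z, hgz, hfg, hzy⟩ := h (ε / 4) (by positivity)
  filter_upwards [Metric.tendsto_nhds.mp hgz (ε / 4) (by positivity)] with i hi
  linarith [dist_triangle4 (f i) (g i) z y, hfg i]

section StrictTendsto

variable {A : Type*} [NonUnitalCStarAlgebra A] {ι : Type*} {l : Filter ι}
  {u v : ι → 𝓜(ℂ, A)} {u' v' : 𝓜(ℂ, A)}

/-- Since `a * m = star (star m * star a)`, strict convergence only has to be tested by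
multiplying on the right. -/
lemma strictTendsto_iff_tendsto_mul_coe : StrictTendsto l u u' ↔
    (∀ a : A, Tendsto (fun i => u i * a) l (𝓝 (u' * a))) ∧
      ∀ a : A, Tendsto (fun i => star (u i) * a) l (𝓝 (star u' * a)) := by
  have key (m : 𝓜(ℂ, A)) (a : A) :
      (a : 𝓜(ℂ, A)) * m = star (star m * ((star a : A) : 𝓜(ℂ, A))) := by
    rw [star_mul, star_star, DoubleCentralizer.coe_star, star_star]
  constructor
  · intro h
    refine ⟨fun a => (h a).1, fun a => ?_⟩
    simpa only [key, star_star] using (h (star a)).2.star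
  · rintro ⟨h₁, h₂⟩ a
    simpa only [key] using And.intro (h₁ a) (h₂ (star a)).star

lemma strictTendsto_const (m : 𝓜(ℂ, A)) : StrictTendsto l (fun _ => m) m :=
  fun _ => ⟨tendsto_const_nhds, tendsto_const_nhds⟩

lemma StrictTendsto.add (hu : StrictTendsto l u u') (hv : StrictTendsto l v v') :
    StrictTendsto l (fun i => u i + v i) (u' + v') := fun a =>
  ⟨by simpa only [add_mul] using (hu a).1.add (hv a).1,
    by simpa only [mul_add] using (hu a).2.add (hv a).2⟩

protected lemma StrictTendsto.star (hu : StrictTendsto l u u') :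
    StrictTendsto l (fun i => star (u i)) (star u') := by
  rw [strictTendsto_iff_tendsto_mul_coe] at hu ⊢
  simpa only [star_star] using hu.symm

lemma tendsto_mul_mul_coe {C : ℝ} (hu : ∀ a : A, Tendsto (fun i => u i * a) l (𝓝 (u' * a)))
    (hv : ∀ a : A, Tendsto (fun i => v i * a) l (𝓝 (v' * a))) (hC : ∀ i, ‖u i‖ ≤ C) (a : A) :
    Tendsto (fun i => u i * v i * a) l (𝓝 (u' * v' * a)) := by
  have hfar : Tendsto (fun i => u i * (v i * a - v' * a)) l (𝓝 0) :=
    isBoundedUnder_le_mul_tendsto_zero (isBoundedUnder_of ⟨C, hC⟩)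
      (tendsto_sub_nhds_zero_iff.mpr (hv a))
  have hnear : Tendsto (fun i => u i * (v' * a)) l (𝓝 (u' * (v' * a))) := by
    rw [DoubleCentralizer.mul_coe]
    exact hu _
  simpa only [mul_sub, sub_add_cancel, zero_add, mul_assoc] using hfar.add hnear

lemma StrictTendsto.mul {C D : ℝ} (hu : StrictTendsto l u u') (hv : StrictTendsto l v v')
    (hC : ∀ i, ‖u i‖ ≤ C) (hD : ∀ i, ‖v i‖ ≤ D) :
    StrictTendsto l (fun i => u i * v i) (u' * v') := by
  rw [strictTendsto_iff_tendsto_mul_coe] at hu hv ⊢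
  refine ⟨tendsto_mul_mul_coe hu.1 hv.1 hC, ?_⟩
  simpa only [star_mul] using tendsto_mul_mul_coe hv.2 hu.2 (by simpa only [norm_star] using hD)

lemma StrictTendsto.of_forall_approx
    (h : ∀ ε > 0, ∃ v v', StrictTendsto l v v' ∧ (∀ i, ‖u i - v i‖ ≤ ε) ∧ ‖v' - u'‖ ≤ ε) :
    StrictTendsto l u u' := by
  have norm_mul_coe_le (w : 𝓜(ℂ, A)) (a : A) {ε : ℝ} (hε : 0 < ε)
      (hw : ‖w‖ ≤ ε / (‖(a : 𝓜(ℂ, A))‖ + 1)) : ‖w * a‖ ≤ ε :=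
    calc ‖w * a‖ ≤ ‖w‖ * ‖(a : 𝓜(ℂ, A))‖ := norm_mul_le _ _
      _ ≤ ε / (‖(a : 𝓜(ℂ, A))‖ + 1) * (‖(a : 𝓜(ℂ, A))‖ + 1) := by gcongr; linarith
      _ = ε := div_mul_cancel₀ _ (by positivity)
  rw [strictTendsto_iff_tendsto_mul_coe]
  constructor
  · refine fun a => Metric.tendsto_of_forall_approx fun ε hε => ?_
    obtain ⟨v, v', hv, huv, hv'⟩ := h _ (by positivity : 0 < ε / (‖(a : 𝓜(ℂ, A))‖ + 1))
    refine ⟨_, _, (hv a).1, fun i => ?_, ?_⟩ <;> rw [dist_eq_norm, ← sub_mul]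
    exacts [norm_mul_coe_le _ a hε (huv i), norm_mul_coe_le _ a hε hv']
  · refine fun a => Metric.tendsto_of_forall_approx fun ε hε => ?_
    obtain ⟨v, v', hv, huv, hv'⟩ := h _ (by positivity : 0 < ε / (‖(a : 𝓜(ℂ, A))‖ + 1))
    refine ⟨_, _, (strictTendsto_iff_tendsto_mul_coe.mp hv).2 a, fun i => ?_, ?_⟩ <;>
      rw [dist_eq_norm, ← sub_mul, ← star_sub]
    exacts [norm_mul_coe_le _ a hε (by rw [norm_star]; exact huv i),
      norm_mul_coe_le _ a hε (by rwa [norm_star])]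

end StrictTendsto

section Subalgebra

variable {A B : Type*} [NonUnitalCStarAlgebra A] [CStarAlgebra B] {ι : Type*} (l : Filter ι)
  (Φ : ι → B →⋆ₐ[ℂ] 𝓜(ℂ, A)) (Ψ : B →⋆ₐ[ℂ] 𝓜(ℂ, A))

def strictTendstoSubalgebra : StarSubalgebra ℂ B where
  carrier := {b | StrictTendsto l (fun i => Φ i b) (Ψ b)}
  add_mem' {b c} hb hc := by simpa only [Set.mem_ofPred_eq, map_add] using hb.add hc
  mul_mem' {b c} hb hc := by
    simpa only [Set.mem_ofPred_eq, map_mul] using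
      hb.mul hc (fun i => NonUnitalStarAlgHom.norm_apply_le (Φ i) b)
        (fun i => NonUnitalStarAlgHom.norm_apply_le (Φ i) c)
  algebraMap_mem' r := by
    simpa only [Set.mem_ofPred_eq, AlgHomClass.commutes] using strictTendsto_const _
  star_mem' {b} hb := by simpa only [Set.mem_ofPred_eq, map_star] using hb.star

lemma isClosed_strictTendstoSubalgebra : IsClosed (strictTendstoSubalgebra l Φ Ψ : Set B) := by
  refine isClosed_iff_frequently.mpr fun b hb => StrictTendsto.of_forall_approx fun ε hε => ?_
  obtain ⟨c, hc, hcb⟩ := (hb.and_eventually (Metric.closedBall_mem_nhds b hε)).exists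
  have hbc : ‖b - c‖ ≤ ε := by rwa [← dist_eq_norm, dist_comm]
  refine ⟨_, _, hc, fun i => ?_, ?_⟩ <;> rw [← map_sub]
  exacts [(NonUnitalStarAlgHom.norm_apply_le _ _).trans hbc,
    (NonUnitalStarAlgHom.norm_apply_le _ _).trans (by rwa [← dist_eq_norm])]

lemma strictTendsto_of_mem_elemental {b₀ b : B} (h₀ : StrictTendsto l (fun i => Φ i b₀) (Ψ b₀))
    (hb : b ∈ StarAlgebra.elemental ℂ b₀) : StrictTendsto l (fun i => Φ i b) (Ψ b) :=
  StarAlgebra.elemental.le_of_mem (isClosed_strictTendstoSubalgebra l Φ Ψ) h₀ hb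

end Subalgebra

lemma cfc_eq_cfcHomSuperset {R A : Type*} {p : A → Prop} [CommSemiring R] [StarRing R]
    [MetricSpace R] [IsTopologicalSemiring R] [ContinuousStar R] [Ring A] [StarRing A]
    [TopologicalSpace A] [Algebra R A] [ContinuousFunctionalCalculus R A p]
    {a : A} (ha : p a) {s : Set R} (hs : spectrum R a ⊆ s) {f : R → R} (hf : ContinuousOn f s) :
    cfc f a = cfcHomSuperset ha hs ⟨_, hf.domRestrict⟩ := by
  rw [cfcHomSuperset_apply, cfc_apply f a ha (hf.mono hs)]
  rfl

/-- For a compact set `K ⊆ ℂ` and `f` continuous on `K`, the functional calculus `x ↦ f(x)` is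
strictly continuous on the set of normal multipliers with spectrum contained in `K`. -/
theorem stmt_3 {A : Type*} [NonUnitalCStarAlgebra A]
    (K : Set ℂ) (hK : IsCompact K) (f : ℂ → ℂ) (hf : ContinuousOn f K)
    {ι : Type*} (l : Filter ι) (x : ι → 𝓜(ℂ, A)) (y : 𝓜(ℂ, A))
    (hxn : ∀ i, IsStarNormal (x i)) (hyn : IsStarNormal y)
    (hxK : ∀ i, spectrum ℂ (x i) ⊆ K) (hyK : spectrum ℂ y ⊆ K)
    (hconv : StrictTendsto l x y) :
    StrictTendsto l (fun i => cfc f (x i)) (cfc f y) := by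
  have : CompactSpace K := isCompact_iff_compactSpace.mp hK
  simp only [cfc_eq_cfcHomSuperset (hxn _) (hxK _) hf, cfc_eq_cfcHomSuperset hyn hyK hf]
  refine strictTendsto_of_mem_elemental l (fun i => cfcHomSuperset (hxn i) (hxK i))
    (cfcHomSuperset hyn hyK) ?_ (ContinuousMap.elemental_id_eq_top K ▸ StarSubalgebra.mem_top)
  simpa only [cfcHomSuperset_id] using hconv
end

section
/- Let $A$ be a C*-algebra and let $x, y \in A_+$ with $y \in \overline{x A}$ (the closure of the right ideal generated by $x$). Then for any positive element $c$ of the minimal unitization $A^\sim$, one has $y c y \precsim x c x$ in the Cuntz subequivalence order on $A$. -/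
/-!
For `ε > 0` put `h_ε = f_ε(x)` with `f_ε(t) = t / (t² + ε)`. Since `|t f_ε(t)| ≤ 1` and
`|t² f_ε(t) - t| ≤ √ε / 2`, we get `‖x h_ε‖ ≤ 1` and `‖x h_ε x - x‖ ≤ √ε / 2`; hence `x h_ε` is a
left approximate unit for the closed right ideal generated by `x`, so `‖y - x h_ε y‖ → 0`.
Taking `v = y h_ε`, the difference `y c y - v (x c x) v*` equals
`y c (y - x h_ε y) + (y - x h_ε y)* c (x h_ε y)`, which tends to `0`.
-/

open Filter Topology

lemma continuous_div_sq_add {ε : ℝ} (hε : 0 < ε) : Continuous fun t : ℝ => t / (t ^ 2 + ε) :=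
  continuous_id.div (by fun_prop) fun t => by positivity

lemma abs_mul_div_sq_add_le_one {ε : ℝ} (hε : 0 < ε) (t : ℝ) :
    |t * (t / (t ^ 2 + ε))| ≤ 1 := by
  have hd : 0 < t ^ 2 + ε := by positivity
  rw [← mul_div_assoc, ← sq, abs_div, abs_of_pos hd, abs_of_nonneg (sq_nonneg t), div_le_one hd]
  linarith

lemma abs_mul_div_sq_add_mul_sub_le {ε : ℝ} (hε : 0 < ε) (t : ℝ) :
    |t * (t / (t ^ 2 + ε)) * t - t| ≤ Real.sqrt ε / 2 := by
  have hd : 0 < t ^ 2 + ε := by positivity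
  have hs : Real.sqrt ε ^ 2 = ε := Real.sq_sqrt hε.le
  have hs0 : 0 < Real.sqrt ε := Real.sqrt_pos.mpr hε
  have h1 : t * (t / (t ^ 2 + ε)) * t - t = -(t * ε) / (t ^ 2 + ε) := by
    field_simp; ring
  rw [h1, abs_div, abs_of_pos hd, div_le_iff₀ hd, abs_neg, abs_mul, abs_of_pos hε]
  -- AM-GM: `2 √ε |t| ≤ t² + ε`
  nlinarith [abs_nonneg t, sq_abs t, mul_nonneg hs0.le (sq_nonneg (|t| - Real.sqrt ε))]

lemma norm_sub_mul_mul_le {R : Type*} [NonUnitalSeminormedRing R] {x e : R} (he : ‖x * e‖ ≤ 1)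
    (y a : R) : ‖y - x * e * y‖ ≤ 2 * ‖y - x * a‖ + ‖x * e * x - x‖ * ‖a‖ := by
  calc ‖y - x * e * y‖
      = ‖(y - x * a) - (x * e) * (y - x * a) - (x * e * x - x) * a‖ := by congr 1; noncomm_ring
    _ ≤ ‖y - x * a‖ + ‖x * e‖ * ‖y - x * a‖ + ‖x * e * x - x‖ * ‖a‖ := by
        refine (norm_sub_le _ _).trans (add_le_add ((norm_sub_le _ _).trans ?_) (norm_mul_le _ _))
        gcongr
        exact norm_mul_le _ _
    _ ≤ 2 * ‖y - x * a‖ + ‖x * e * x - x‖ * ‖a‖ := by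
        nlinarith [norm_nonneg (y - x * a)]

lemma norm_mul_mul_sub_mul_mul_mul_le {R : Type*} [NonUnitalNormedRing R] [StarRing R]
    [NormedStarGroup R] {x y h : R} (hx : IsSelfAdjoint x) (hy : IsSelfAdjoint y)
    (hh : IsSelfAdjoint h) (hxh : ‖x * h‖ ≤ 1) (c : R) :
    ‖y * c * y - (y * h) * (x * c * x) * star (y * h)‖ ≤ 2 * ‖y‖ * ‖c‖ * ‖y - x * h * y‖ := by
  have hstar : star (y - x * h * y) = y - y * h * x := by
    rw [star_sub, star_mul, star_mul, hx.star_eq, hy.star_eq, hh.star_eq, mul_assoc]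
  have hxhy : ‖x * h * y‖ ≤ ‖y‖ :=
    (norm_mul_le _ _).trans (mul_le_of_le_one_left (norm_nonneg y) hxh)
  rw [star_mul, hh.star_eq, hy.star_eq]
  calc ‖y * c * y - (y * h) * (x * c * x) * (h * y)‖
      = ‖y * c * (y - x * h * y) + star (y - x * h * y) * c * (x * h * y)‖ := by
        rw [hstar]; congr 1; noncomm_ring
    _ ≤ ‖y‖ * ‖c‖ * ‖y - x * h * y‖ + ‖y - x * h * y‖ * ‖c‖ * ‖x * h * y‖ := by
        refine (norm_add_le _ _).trans (add_le_add ?_ ?_)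
        · exact (norm_mul_le _ _).trans (by gcongr; exact norm_mul_le _ _)
        · rw [← norm_star (y - x * h * y)]
          exact (norm_mul_le _ _).trans (by gcongr; exact norm_mul_le _ _)
    _ ≤ 2 * ‖y‖ * ‖c‖ * ‖y - x * h * y‖ := by
        nlinarith [mul_nonneg (norm_nonneg c) (norm_nonneg (y - x * h * y))]

lemma Unitization.inr_snd_inr_mul_mul_inr {R A : Type*} [CommRing R] [NonUnitalRing A]
    [Module R A] [IsScalarTower R A A] [SMulCommClass R A A] (a b : A) (c : Unitization R A) :
    (inr (inr a * c * inr b : Unitization R A).snd : Unitization R A) = inr a * c * inr b := by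
  ext <;> simp

lemma norm_snd_sub_mul_snd_mul_star_le {A : Type*} [NonUnitalCStarAlgebra A] {x y h : A}
    (hx : IsSelfAdjoint x) (hy : IsSelfAdjoint y) (hh : IsSelfAdjoint h) (hxh : ‖x * h‖ ≤ 1)
    (c : Unitization ℂ A) :
    ‖((y : Unitization ℂ A) * c * y).snd - (y * h) * ((x : Unitization ℂ A) * c * x).snd *
      star (y * h)‖ ≤ 2 * ‖y‖ * ‖c‖ * ‖y - x * h * y‖ := by
  have := norm_mul_mul_sub_mul_mul_mul_le (hx.inr ℂ) (hy.inr ℂ) (hh.inr ℂ)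
    (by rwa [← Unitization.inr_mul, Unitization.norm_inr]) c
  rw [← Unitization.norm_inr (𝕜 := ℂ), Unitization.inr_sub, Unitization.inr_mul,
    Unitization.inr_mul, Unitization.inr_star, Unitization.inr_mul,
    Unitization.inr_snd_inr_mul_mul_inr, Unitization.inr_snd_inr_mul_mul_inr]
  refine this.trans_eq ?_
  rw [← Unitization.inr_mul, ← Unitization.inr_mul, ← Unitization.inr_sub,
    Unitization.norm_inr, Unitization.norm_inr]

section RegularizedInverse

variable {A : Type*} [NonUnitalCStarAlgebra A]

noncomputable def regInv (x : A) (ε : ℝ) : A :=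
  cfcₙ (fun t : ℝ => t / (t ^ 2 + ε)) x

lemma isSelfAdjoint_regInv (x : A) (ε : ℝ) : IsSelfAdjoint (regInv x ε) :=
  cfcₙ_predicate _ x

variable {x : A}

lemma cfcₙ_mul_div_sq_add (hx : IsSelfAdjoint x) {ε : ℝ} (hε : 0 < ε) :
    cfcₙ (fun t : ℝ => t * (t / (t ^ 2 + ε))) x = x * regInv x ε := by
  rw [cfcₙ_mul (fun t : ℝ => t) _ x (hg := (continuous_div_sq_add hε).continuousOn),
    cfcₙ_id' ℝ x]
  rfl

lemma norm_mul_regInv_le_one (hx : IsSelfAdjoint x) {ε : ℝ} (hε : 0 < ε) :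
    ‖x * regInv x ε‖ ≤ 1 := by
  rw [← cfcₙ_mul_div_sq_add hx hε]
  exact norm_cfcₙ_le fun t _ => abs_mul_div_sq_add_le_one hε t

lemma norm_mul_regInv_mul_sub_le (hx : IsSelfAdjoint x) {ε : ℝ} (hε : 0 < ε) :
    ‖x * regInv x ε * x - x‖ ≤ Real.sqrt ε / 2 := by
  have hcont := (continuous_div_sq_add hε).continuousOn (s := quasispectrum ℝ x)
  have hcfc : cfcₙ (fun t : ℝ => t * (t / (t ^ 2 + ε)) * t - t) x = x * regInv x ε * x - x := by
    rw [cfcₙ_sub _ (fun t : ℝ => t) x, cfcₙ_mul _ (fun t : ℝ => t) x, cfcₙ_mul_div_sq_add hx hε,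
      cfcₙ_id' ℝ x]
  rw [← hcfc]
  exact norm_cfcₙ_le fun t _ => abs_mul_div_sq_add_mul_sub_le hε t

lemma tendsto_norm_sub_mul_regInv_mul {y : A} (hx : IsSelfAdjoint x)
    (hy : y ∈ closure {w : A | ∃ a : A, w = x * a}) :
    Tendsto (fun ε => ‖y - x * regInv x ε * y‖) (𝓝[>] 0) (𝓝 0) := by
  refine Metric.tendsto_nhds.mpr fun δ hδ => ?_
  obtain ⟨_, ⟨a, rfl⟩, hya⟩ := Metric.mem_closure_iff.mp hy (δ / 4) (by positivity)
  rw [dist_eq_norm] at hya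
  have hsqrt : Tendsto (fun ε => Real.sqrt ε / 2 * ‖a‖) (𝓝[>] 0) (𝓝 0) := by
    simpa using ((Real.continuous_sqrt.tendsto 0).div_const 2 |>.mul_const ‖a‖).mono_left
      nhdsWithin_le_nhds
  filter_upwards [self_mem_nhdsWithin, hsqrt.eventually (gt_mem_nhds (half_pos hδ))]
    with ε (hε : 0 < ε) hsmall
  rw [Real.dist_0_eq_abs, abs_of_nonneg (norm_nonneg _)]
  calc ‖y - x * regInv x ε * y‖
      ≤ 2 * ‖y - x * a‖ + ‖x * regInv x ε * x - x‖ * ‖a‖ :=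
        norm_sub_mul_mul_le (norm_mul_regInv_le_one hx hε) y a
    _ ≤ 2 * ‖y - x * a‖ + Real.sqrt ε / 2 * ‖a‖ := by
        gcongr; exact norm_mul_regInv_mul_sub_le hx hε
    _ < δ := by linarith

end RegularizedInverse

theorem stmt_4_general {A : Type*} [NonUnitalCStarAlgebra A] [PartialOrder A] [StarOrderedRing A]
    (x y : A) (hx : 0 ≤ x) (hy : 0 ≤ y)
    (hmem : y ∈ closure {w : A | ∃ a : A, w = x * a})
    (c : Unitization ℂ A) :
    CuntzLE (((Unitization.inr y : Unitization ℂ A) * c * Unitization.inr y).snd)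
      (((Unitization.inr x : Unitization ℂ A) * c * Unitization.inr x).snd) := by
  have hε : ∀ n : ℕ, 0 < 1 / ((n : ℝ) + 1) := fun n => by positivity
  have hε_lim : Tendsto (fun n : ℕ => 1 / ((n : ℝ) + 1)) atTop (𝓝[>] 0) :=
    tendsto_nhdsWithin_iff.mpr ⟨tendsto_one_div_add_atTop_nhds_zero_nat, .of_forall hε⟩
  have hlim := (tendsto_norm_sub_mul_regInv_mul hx.isSelfAdjoint hmem).comp hε_lim
  refine ⟨fun n => y * regInv x (1 / (n + 1)), squeeze_zero (fun n => norm_nonneg _)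
    (fun n => norm_snd_sub_mul_snd_mul_star_le hx.isSelfAdjoint hy.isSelfAdjoint
      (isSelfAdjoint_regInv x _) (norm_mul_regInv_le_one hx.isSelfAdjoint (hε n)) c) ?_⟩
  simpa using hlim.const_mul (2 * ‖y‖ * ‖c‖)

/-- If `y ∈ closure (x A)` then `y c y ≾ x c x` for every positive `c` in the unitization
`A⁺¹` (the products `y c y` and `x c x`, computed in the unitization, lie in `A`, and the Cuntz
subequivalence is witnessed in `A`). -/
theorem stmt_4 {A : Type*} [NonUnitalCStarAlgebra A] [PartialOrder A] [StarOrderedRing A]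
    (x y : A) (hx : 0 ≤ x) (hy : 0 ≤ y)
    (hmem : y ∈ closure {w : A | ∃ a : A, w = x * a})
    (c : Unitization ℂ A) (hc : 0 ≤ c) :
    CuntzLE (((Unitization.inr y : Unitization ℂ A) * c * Unitization.inr y).snd)
      (((Unitization.inr x : Unitization ℂ A) * c * Unitization.inr x).snd) :=
  stmt_4_general x y hx hy hmem c
end

section
/- For every $\varepsilon > 0$ there is $\delta > 0$ such that: whenever $A$ is a C*-algebra and $x, h \in A_+$ satisfy $\|x\| \leq 1$, $\|h\| \leq 1$, and $\|x h x\| > 1 - \delta$, then $\|h x h\| > 1 - \varepsilon$. In fact $\delta = 1 - (1-\varepsilon)^{1/2}$ works when $\varepsilon \leq 1$. -/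
universe u

open scoped NNReal

lemma mul_self_le_self' {A : Type u} [NonUnitalCStarAlgebra A] [PartialOrder A]
    [StarOrderedRing A] {x : A} (hx : 0 ≤ x) (hx1 : ‖x‖ ≤ 1) : x * x ≤ x := by
  have hspec : ∀ t ∈ quasispectrum ℝ x, t ≤ ‖x‖ := by
    have h1 := (QuasispectrumRestricts.le_nnreal_iff
      (QuasispectrumRestricts.nnreal_of_nonneg hx) (r := ‖x‖₊)).mp
      (fun t ht => CStarAlgebra.le_nnnorm_of_mem_quasispectrum ht)
    simpa using h1
  have hmul : x * x = cfcₙ (fun t : ℝ => t * t) x := by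
    rw [cfcₙ_mul _ _ x, cfcₙ_id' ℝ x]
  conv_rhs => rw [← cfcₙ_id' ℝ x]
  rw [hmul, cfcₙ_le_iff (fun t : ℝ => t * t) _ x]
  intro t ht
  have h0 : 0 ≤ t := quasispectrum_nonneg_of_nonneg x hx t ht
  nlinarith [hspec t ht]

lemma key_ineq {A : Type u} [NonUnitalCStarAlgebra A] [PartialOrder A] [StarOrderedRing A]
    (x h : A) (hx : 0 ≤ x) (hh : 0 ≤ h) (hx1 : ‖x‖ ≤ 1) (hh1 : ‖h‖ ≤ 1) :
    ‖x * h * x‖ ^ 2 ≤ ‖h * x * h‖ := by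
  have hxsa : IsSelfAdjoint x := .of_nonneg hx
  have hhsa : IsSelfAdjoint h := .of_nonneg hh
  have hsa : IsSelfAdjoint (x * h * x) := by
    rw [IsSelfAdjoint, star_mul, star_mul, hxsa.star_eq, hhsa.star_eq, mul_assoc]
  have hn : ‖x * h * x‖ ^ 2 = ‖(x * h * x) * (x * h * x)‖ := by
    rw [sq, ← CStarRing.norm_star_mul_self, hsa.star_eq]
  -- x ≥ 0, ‖x‖ ≤ 1 ⇒ x * x ≤ x, so h * (x*x) * h ≤ h * x * h
  have hxx : x * x ≤ x := mul_self_le_self' hx hx1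
  have hconj : h * (x * x) * h ≤ h * x * h := by
    have := star_left_conjugate_le_conjugate hxx h
    rwa [hhsa.star_eq] at this
  have hpos : 0 ≤ h * (x * x) * h := by
    have : h * (x * x) * h = star (x * h) * (x * h) := by
      rw [star_mul, hxsa.star_eq, hhsa.star_eq]; noncomm_ring
    rw [this]; exact star_mul_self_nonneg _
  have h2 : ‖h * (x * x) * h‖ ≤ ‖h * x * h‖ :=
    CStarAlgebra.norm_le_norm_of_nonneg_of_le hpos hconj
  calc ‖x * h * x‖ ^ 2 = ‖(x * h * x) * (x * h * x)‖ := hn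
    _ = ‖x * (h * (x * x) * h) * x‖ := by congr 1; noncomm_ring
    _ ≤ ‖x * (h * (x * x) * h)‖ * ‖x‖ := norm_mul_le _ _
    _ ≤ ‖x‖ * ‖h * (x * x) * h‖ * ‖x‖ := by
        gcongr; exact norm_mul_le _ _
    _ ≤ ‖h * x * h‖ := by
        have h3 := norm_nonneg (h * (x * x) * h)
        have h4 := norm_nonneg x
        have h5 := norm_nonneg (h * x * h)
        have h6 : 0 ≤ ‖h * (x * x) * h‖ * ‖x‖ := mul_nonneg h3 h4
        nlinarith

lemma key_ineq' {A : Type u} [NonUnitalCStarAlgebra A] [PartialOrder A] [StarOrderedRing A]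
    (x h : A) (hx : 0 ≤ x) (hh : 0 ≤ h) (hx1 : ‖x‖ ≤ 1) (hh1 : ‖h‖ ≤ 1)
    {ε : ℝ} (hyp : Real.sqrt (1 - ε) < ‖x * h * x‖) : 1 - ε < ‖h * x * h‖ := by
  have h0 : (0:ℝ) ≤ ‖x * h * x‖ := norm_nonneg _
  have : 1 - ε < ‖x * h * x‖ ^ 2 := by
    rcases le_or_gt (1 - ε) 0 with hc | hc
    · have : 0 < ‖x * h * x‖ := lt_of_le_of_lt (Real.sqrt_nonneg _) hyp
      nlinarith
    · have := Real.sq_sqrt hc.le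
      nlinarith [Real.sqrt_nonneg (1 - ε)]
  exact this.trans_le (key_ineq x h hx hh hx1 hh1)

/-- For every `ε > 0` there is `δ > 0` such that in every C*-algebra, if `x, h` are positive
contractions with `‖x h x‖ > 1 - δ`, then `‖h x h‖ > 1 - ε`.  Moreover, when `ε ≤ 1`,
`δ = 1 - (1 - ε)^(1/2)` works (i.e. `‖x h x‖ > √(1 - ε)` implies `‖h x h‖ > 1 - ε`). -/
theorem stmt_6 :
    (∀ ε : ℝ, 0 < ε →
      ∃ δ : ℝ, 0 < δ ∧
        ∀ (A : Type u) [NonUnitalCStarAlgebra A] [PartialOrder A] [StarOrderedRing A]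
          (x h : A), 0 ≤ x → 0 ≤ h → ‖x‖ ≤ 1 → ‖h‖ ≤ 1 →
            1 - δ < ‖x * h * x‖ → 1 - ε < ‖h * x * h‖) ∧
    (∀ ε : ℝ, 0 < ε → ε ≤ 1 →
      ∀ (A : Type u) [NonUnitalCStarAlgebra A] [PartialOrder A] [StarOrderedRing A]
        (x h : A), 0 ≤ x → 0 ≤ h → ‖x‖ ≤ 1 → ‖h‖ ≤ 1 →
          1 - (1 - Real.sqrt (1 - ε)) < ‖x * h * x‖ → 1 - ε < ‖h * x * h‖) := by
  constructor
  · intro ε hε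
    set m := min ε 1 with hm
    have hm0 : 0 < m := lt_min hε one_pos
    have hm1 : m ≤ 1 := min_le_right _ _
    refine ⟨1 - Real.sqrt (1 - m), by
      have : Real.sqrt (1 - m) < 1 :=
        (Real.sqrt_lt' one_pos).mpr (by nlinarith)
      linarith, ?_⟩
    intro A _ _ _ x h hx hh hx1 hh1 hyp
    have : Real.sqrt (1 - m) < ‖x * h * x‖ := by linarith
    have := key_ineq' x h hx hh hx1 hh1 this
    have : 1 - ε ≤ 1 - m := by simp [hm, min_le_left]; linarith [min_le_left ε 1]
    linarith [key_ineq' x h hx hh hx1 hh1 (by linarith : Real.sqrt (1 - m) < ‖x * h * x‖)]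
  · intro ε hε hε1 A _ _ _ x h hx hh hx1 hh1 hyp
    exact key_ineq' x h hx hh hx1 hh1 (by linarith)
end

section
/- Let $A$ be a simple C*-algebra and let $d : M_\infty(A)_+ \to [0,\infty]$ be a dimension function. If there is a nonzero positive element $a$ of the Pedersen ideal of $A$ with $d(a) < \infty$, then $d(b) < \infty$ for all positive elements $b$ of the Pedersen ideal of $A$. -/
open Filter Topology Matrix
open scoped ENNReal

/-- Positivity of a matrix over a star ring, i.e. of an element of a matrix algebra over a
C*-algebra: `a = cᴴ * c` for some `c`. -/
def MatPos {R : Type*} [NonUnitalRing R] [StarRing R] {ι : Type*} [Fintype ι]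
    (a : Matrix ι ι R) : Prop :=
  ∃ c : Matrix ι ι R, a = cᴴ * c

/-- Cuntz subequivalence between elements of (possibly different) matrix algebras over a
C*-algebra, phrased via convergence in the (product) topology of matrices, which agrees with the
norm topology of the matrix C*-algebra. -/
def MCuntzLE {A : Type*} [NonUnitalCStarAlgebra A] {ι κ : Type*} [Fintype ι] [Fintype κ]
    (a : Matrix ι ι A) (b : Matrix κ κ A) : Prop :=
  ∃ v : ℕ → Matrix ι κ A, Tendsto (fun n => v n * b * (v n)ᴴ) atTop (𝓝 a)

/-- The embedding of `A` as `1 × 1` matrices. -/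
def mOne {A : Type*} (a : A) : Matrix (Fin 1) (Fin 1) A := Matrix.of fun _ _ => a

/-- `n` copies `a ⊕ a ⊕ ⋯ ⊕ a` of a matrix, as a block diagonal matrix. -/
def nCopies {A : Type*} [Zero A] (n : ℕ) {ι : Type*} [Fintype ι] [DecidableEq ι]
    (a : Matrix ι ι A) : Matrix (ι × Fin n) (ι × Fin n) A :=
  Matrix.blockDiagonal fun _ : Fin n => a

/-- The Pedersen ideal of `A`: the intersection of all dense two-sided ideals (this is the
smallest dense two-sided ideal). -/
def pedersenIdeal (A : Type*) [NonUnitalCStarAlgebra A] : Set A :=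
  {a : A | ∀ I : TwoSidedIdeal A, Dense (I : Set A) → a ∈ I}

/-- A C*-algebra is simple if it is nonzero and has no nontrivial closed two-sided ideals. -/
def IsSimpleCStar (A : Type*) [NonUnitalCStarAlgebra A] : Prop :=
  (∃ a : A, a ≠ 0) ∧ ∀ I : TwoSidedIdeal A, IsClosed (I : Set A) → I = ⊥ ∨ I = ⊤

/-- A dimension function on `A`: a function on positive elements of matrix algebras over `A`
(i.e. on `M_∞(A)₊`), additive on direct sums and order preserving for Cuntz subequivalence. -/
structure DimFn (A : Type*) [NonUnitalCStarAlgebra A] where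
  d : ∀ (ι : Type) [Fintype ι], Matrix ι ι A → ℝ≥0∞
  additive : ∀ (ι κ : Type) [Fintype ι] [Fintype κ] (a : Matrix ι ι A) (b : Matrix κ κ A),
    MatPos a → MatPos b →
      d (ι ⊕ κ) (Matrix.fromBlocks a 0 0 b) = d ι a + d κ b
  mono : ∀ (ι κ : Type) [Fintype ι] [Fintype κ] (a : Matrix ι ι A) (b : Matrix κ κ A),
    MatPos a → MatPos b → MCuntzLE a b → d ι a ≤ d κ b

/-!
By simplicity, the nonzero algebraic ideal `{∑ fⱼ a gⱼ}` is dense, hence contains the Pedersen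
ideal. For `b ≥ 0` written as `∑ fⱼ a gⱼ`, positivity gives `b ≤ ∑ pⱼ a pⱼ*` with
`pⱼ = fⱼ + gⱼ*`, and an inequality `0 ≤ b ≤ c` implies `b ≾ c`. Hence `b ≾ a ⊗ 1ₙ` and
`d(b) ≤ d(a ⊗ 1ₙ) ≤ n d(a) < ∞`.
-/

section Unital

variable {U : Type*} [CStarAlgebra U]

lemma cfc_mul_mul_cfc (f : ℝ → ℝ) (c : U) (hf : Continuous f) (hc : IsSelfAdjoint c) :
    cfc f c * c * cfc f c = cfc (fun x => f x * x * f x) c := by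
  rw [cfc_mul (fun x => f x * x) f c (by fun_prop) hf.continuousOn,
    cfc_mul f (fun x => x) c hf.continuousOn continuousOn_id, cfc_id' ℝ c]

variable [PartialOrder U] [StarOrderedRing U]

/-- `b - β w c w β = β (1 - w c w) β`, and as `1 - w c w = μ²` with `μ` a function of `c`, its norm
is `‖μ b μ‖ ≤ ‖μ c μ‖`. -/
lemma norm_sub_conj_cfc_le {β b c : U} (hβ : 0 ≤ β) (hβb : β * β = b) (hbc : b ≤ c)
    {f : ℝ → ℝ} (hf : Continuous f) {δ : ℝ}
    (hfc : ∀ x, 0 ≤ x → f x * x * f x ≤ 1 ∧ x * (1 - f x * x * f x) ≤ δ) :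
    ‖b - β * cfc f c * c * star (β * cfc f c)‖ ≤ δ := by
  set k : ℝ → ℝ := fun x => f x * x * f x
  set s : ℝ → ℝ := fun x => √(1 - k x)
  have hk : Continuous k := by fun_prop
  have hs : Continuous s := by fun_prop
  have hβsa : star β = β := (IsSelfAdjoint.of_nonneg hβ).star_eq
  have hb : 0 ≤ b := by simpa only [hβsa, hβb] using star_mul_self_nonneg β
  have hc : 0 ≤ c := hb.trans hbc
  have hσ : ∀ x ∈ spectrum ℝ c, 0 ≤ x := fun x hx => spectrum_nonneg_of_nonneg hc hx
  set w := cfc f c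
  set μ := cfc s c
  have hwsa : star w = w := (cfc_predicate f c).star_eq
  have hμsa : star μ = μ := (cfc_predicate s c).star_eq
  have hμμ : μ * μ = 1 - w * c * w := by
    rw [cfc_mul_mul_cfc f c hf (.of_nonneg hc), ← cfc_mul s s c, ← cfc_one ℝ c,
      ← cfc_sub (1 : ℝ → ℝ) k c]
    exact cfc_congr fun x hx => Real.mul_self_sqrt (sub_nonneg.mpr (hfc x (hσ x hx)).1)
  have hdiff : b - β * w * c * star (β * w) = star (μ * β) * (μ * β) := by
    simp only [star_mul, hβsa, hwsa, hμsa]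
    rw [← hβb]
    calc β * β - β * w * c * (w * β) = β * (1 - w * c * w) * β := by noncomm_ring
      _ = β * μ * (μ * β) := by rw [← hμμ]; noncomm_ring
  have hμbμ : μ * b * μ ≤ μ * c * μ := by
    simpa only [hμsa] using star_left_conjugate_le_conjugate hbc μ
  have hμbμ_nonneg : 0 ≤ μ * b * μ := by
    simpa only [hμsa] using star_left_conjugate_nonneg hb μ
  calc ‖b - β * w * c * star (β * w)‖ = ‖μ * b * μ‖ := by
        rw [hdiff, CStarRing.norm_star_mul_self, ← CStarRing.norm_self_mul_star, star_mul, hμsa,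
          hβsa, ← hβb]
        noncomm_ring
    _ ≤ ‖μ * c * μ‖ := CStarAlgebra.norm_le_norm_of_nonneg_of_le hμbμ_nonneg hμbμ
    _ ≤ δ := by
        rw [cfc_mul_mul_cfc s c hs (.of_nonneg hc)]
        have hδ : 0 ≤ δ := by simpa using (hfc 0 le_rfl).2
        refine norm_cfc_le hδ fun x hx => ?_
        obtain ⟨hk1, hkδ⟩ := hfc x (hσ x hx)
        have hss : s x * s x = 1 - k x := Real.mul_self_sqrt (sub_nonneg.mpr hk1)
        rw [show s x * x * s x = x * (1 - k x) by rw [← hss]; ring, Real.norm_eq_abs,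
          abs_of_nonneg (mul_nonneg (hσ x hx) (sub_nonneg.mpr hk1))]
        exact hkδ

end Unital

section NonUnital

variable {A : Type*} [NonUnitalCStarAlgebra A]

lemma CuntzLE.tendsto {a b : A} (h : CuntzLE a b) :
    ∃ v : ℕ → A, Tendsto (fun n => v n * b * star (v n)) atTop (𝓝 a) := by
  obtain ⟨v, hv⟩ := h
  exact ⟨v, tendsto_iff_norm_sub_tendsto_zero.mpr (by simpa only [norm_sub_rev] using hv)⟩
variable [PartialOrder A] [StarOrderedRing A]

open Unitization in
lemma norm_sub_conj_cfcₙ_le {b c : A} (hb : 0 ≤ b) (hbc : b ≤ c) {f : ℝ → ℝ}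
    (hf : Continuous f) (hf0 : f 0 = 0) {δ : ℝ}
    (hfc : ∀ x, 0 ≤ x → f x * x * f x ≤ 1 ∧ x * (1 - f x * x * f x) ≤ δ) :
    ‖b - CFC.sqrt b * cfcₙ f c * c * star (CFC.sqrt b * cfcₙ f c)‖ ≤ δ := by
  have hc : 0 ≤ c := hb.trans hbc
  rw [← Unitization.norm_inr (𝕜 := ℂ)]
  simp only [Unitization.inr_sub, Unitization.inr_mul, Unitization.inr_star]
  rw [Unitization.real_cfcₙ_eq_cfc_inr c f hf0]
  exact norm_sub_conj_cfc_le (inr_nonneg_iff.mpr (CFC.sqrt_nonneg b))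
    (by rw [← Unitization.inr_mul, CFC.sqrt_mul_sqrt_self b hb])
    ((inr_le_iff b c (.of_nonneg hb) (.of_nonneg hc)).mpr hbc) hf hfc

/-- A regularisation of `t ^ (-1/2)` at scale `ε`, so that `w c w ≈ 1` on the support of `c` for
`w = regInvSqrt ε c`. -/
noncomputable def regInvSqrt (ε t : ℝ) : ℝ := √(max t 0) / (max t 0 + ε)

lemma continuous_regInvSqrt {ε : ℝ} (hε : 0 < ε) : Continuous (regInvSqrt ε) :=
  Continuous.div (by fun_prop) (by fun_prop) fun x => by positivity

lemma regInvSqrt_mul_mul_regInvSqrt {ε x : ℝ} (hε : 0 < ε) (hx : 0 ≤ x) :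
    regInvSqrt ε x * x * regInvSqrt ε x ≤ 1 ∧
      x * (1 - regInvSqrt ε x * x * regInvSqrt ε x) ≤ 2 * ε := by
  have hxε : 0 < x + ε := by positivity
  have hk : regInvSqrt ε x * x * regInvSqrt ε x = x ^ 2 / (x + ε) ^ 2 := by
    rw [regInvSqrt, max_eq_left hx]
    field_simp
    rw [Real.sq_sqrt hx]
    ring
  rw [hk]
  constructor
  · rw [div_le_one (by positivity)]; nlinarith
  · rw [one_sub_div (by positivity), mul_div_assoc', div_le_iff₀ (by positivity)]
    nlinarith [mul_nonneg (mul_nonneg hx hε.le) hε.le, pow_pos hε 3]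

lemma cuntzLE_of_le_s8 {b c : A} (hb : 0 ≤ b) (hbc : b ≤ c) : CuntzLE b c := by
  refine ⟨fun n => CFC.sqrt b * cfcₙ (regInvSqrt (1 / (n + 1))) c, ?_⟩
  refine squeeze_zero (fun _ => norm_nonneg _) (fun n => norm_sub_conj_cfcₙ_le hb hbc
    (continuous_regInvSqrt (by positivity)) (by simp [regInvSqrt])
    fun x hx => regInvSqrt_mul_mul_regInvSqrt (by positivity) hx) ?_
  simpa using (tendsto_one_div_add_atTop_nhds_zero_nat (𝕜 := ℝ)).const_mul 2

end NonUnital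

section Sandwich

variable {R : Type*} [NonUnitalRing R]

def sandwichIdeal (a : R) : TwoSidedIdeal R :=
  .mk' {x | ∃ (n : ℕ) (f g : Fin n → R), x = ∑ j, f j * a * g j}
    ⟨0, Fin.elim0, Fin.elim0, by simp⟩
    (by
      rintro _ _ ⟨n, f, g, rfl⟩ ⟨m, f', g', rfl⟩
      exact ⟨n + m, Fin.append f f', Fin.append g g', by simp [Fin.sum_univ_add]⟩)
    (by
      rintro _ ⟨n, f, g, rfl⟩
      exact ⟨n, -f, g, by simp [Finset.sum_neg_distrib]⟩)
    (by
      rintro x _ ⟨n, f, g, rfl⟩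
      exact ⟨n, fun j => x * f j, g, by simp [Finset.mul_sum, mul_assoc]⟩)
    (by
      rintro _ y ⟨n, f, g, rfl⟩
      exact ⟨n, f, fun j => g j * y, by simp [Finset.sum_mul, mul_assoc]⟩)

lemma mem_sandwichIdeal {a x : R} :
    x ∈ sandwichIdeal a ↔ ∃ (n : ℕ) (f g : Fin n → R), x = ∑ j, f j * a * g j :=
  TwoSidedIdeal.mem_mk' ..

lemma mul_mul_mem_sandwichIdeal (a x y : R) : x * a * y ∈ sandwichIdeal a :=
  mem_sandwichIdeal.mpr ⟨1, fun _ => x, fun _ => y, by simp⟩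

def TwoSidedIdeal.topologicalClosure [TopologicalSpace R] [IsTopologicalRing R]
    (I : TwoSidedIdeal R) : TwoSidedIdeal R :=
  .mk' (closure I) (subset_closure I.zero_mem)
    (fun hx hy => map_mem_closure₂ continuous_add hx hy fun _ hx _ hy => I.add_mem hx hy)
    (fun hx => map_mem_closure continuous_neg hx fun _ hx => I.neg_mem hx)
    (fun {x _} hy => map_mem_closure (continuous_const_mul x) hy fun _ hy =>
      I.mul_mem_left _ _ hy)
    (fun {_ y} hx => map_mem_closure (f := (· * y)) (continuous_mul_const y) hx fun _ hx =>
      I.mul_mem_right _ _ hx)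

lemma TwoSidedIdeal.coe_topologicalClosure [TopologicalSpace R] [IsTopologicalRing R]
    (I : TwoSidedIdeal R) : (I.topologicalClosure : Set R) = closure I := by
  ext
  exact TwoSidedIdeal.mem_mk' ..

lemma le_sum_conj_of_eq_sum [StarRing R] [PartialOrder R] [StarOrderedRing R] {ι : Type*}
    [Fintype ι] {a b : R} (ha : 0 ≤ a) (hb : 0 ≤ b) (f g : ι → R)
    (h : b = ∑ j, f j * a * g j) :
    b ≤ ∑ j, (f j + star (g j)) * a * star (f j + star (g j)) := by
  set q := ∑ j, (f j * a * star (f j) + star (g j) * a * g j)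
  have hq : 0 ≤ q := Finset.sum_nonneg fun j _ =>
    add_nonneg (star_right_conjugate_nonneg ha (f j)) (star_left_conjugate_nonneg ha (g j))
  have hsum : ∑ j, (f j + star (g j)) * a * star (f j + star (g j)) = b + star b + q := by
    rw [h, star_sum, ← Finset.sum_add_distrib, ← Finset.sum_add_distrib]
    refine Finset.sum_congr rfl fun j _ => ?_
    simp only [star_add, star_star, star_mul, (IsSelfAdjoint.of_nonneg ha).star_eq]
    noncomm_ring
  rw [hsum, (IsSelfAdjoint.of_nonneg hb).star_eq, add_assoc]
  exact le_add_of_nonneg_right (add_nonneg hb hq)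

end Sandwich

section Pedersen

variable {A : Type*} [NonUnitalCStarAlgebra A]

lemma IsSimpleCStar.dense_of_ne_bot (hA : IsSimpleCStar A) {I : TwoSidedIdeal A} (hI : I ≠ ⊥) :
    Dense (I : Set A) := by
  have hIcl : I ≤ I.topologicalClosure := fun x hx => by
    rw [← SetLike.mem_coe, TwoSidedIdeal.coe_topologicalClosure]
    exact subset_closure hx
  rcases hA.2 I.topologicalClosure (by
    rw [TwoSidedIdeal.coe_topologicalClosure]; exact isClosed_closure) with h | h
  · exact absurd (le_bot_iff.mp (h ▸ hIcl)) hI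
  · rw [dense_iff_closure_eq, ← TwoSidedIdeal.coe_topologicalClosure, h]
    rfl

lemma IsSimpleCStar.pedersenIdeal_subset (hA : IsSimpleCStar A) {I : TwoSidedIdeal A}
    (hI : I ≠ ⊥) : pedersenIdeal A ⊆ I :=
  fun _ hb => hb I (hA.dense_of_ne_bot hI)

variable [PartialOrder A] [StarOrderedRing A]

lemma sandwichIdeal_ne_bot {a : A} (ha : 0 ≤ a) (hane : a ≠ 0) : sandwichIdeal a ≠ ⊥ := by
  intro h
  obtain ⟨v, hv⟩ := (cuntzLE_of_le_s8 ha le_rfl).tendsto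
  have hzero : ∀ n, v n * a * star (v n) = 0 := fun n =>
    (TwoSidedIdeal.mem_bot A).mp (h ▸ mul_mul_mem_sandwichIdeal a (v n) (star (v n)))
  simp only [hzero] at hv
  exact hane (tendsto_nhds_unique hv tendsto_const_nhds)

lemma IsSimpleCStar.exists_sum_eq_of_mem_pedersenIdeal (hA : IsSimpleCStar A) {a b : A}
    (ha : 0 ≤ a) (hane : a ≠ 0) (hb : b ∈ pedersenIdeal A) :
    ∃ (n : ℕ) (f g : Fin n → A), b = ∑ j, f j * a * g j :=
  mem_sandwichIdeal.mp (hA.pedersenIdeal_subset (sandwichIdeal_ne_bot ha hane) hb)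

end Pedersen

section MatrixAlgebra

variable {A : Type*} [NonUnitalCStarAlgebra A]

lemma mOne_eq_diagonal (a : A) : mOne a = diagonal fun _ : Fin 1 => a := by
  ext i j
  simp [mOne, Subsingleton.elim i j]

lemma continuous_mOne : Continuous (mOne : A → Matrix (Fin 1) (Fin 1) A) :=
  continuous_pi fun _ => continuous_pi fun _ => continuous_id

lemma matPos_of_isEmpty {ι : Type*} [Fintype ι] [IsEmpty ι] (M : Matrix ι ι A) : MatPos M :=
  ⟨0, Subsingleton.elim _ _⟩

lemma mCuntzLE_of_isEmpty {ι κ : Type*} [Fintype ι] [Fintype κ] [IsEmpty ι]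
    (M : Matrix ι ι A) (N : Matrix κ κ A) : MCuntzLE M N :=
  ⟨0, tendsto_const_nhds.congr fun _ => Subsingleton.elim _ _⟩

lemma CuntzLE.mCuntzLE_mOne_diagonal {ι : Type*} [Fintype ι] [DecidableEq ι] {b : A}
    {p d : ι → A} (h : CuntzLE b (∑ j, p j * d j * star (p j))) :
    MCuntzLE (mOne b) (diagonal d) := by
  obtain ⟨v, hv⟩ := h.tendsto
  refine ⟨fun n => of fun _ j => v n * p j, ?_⟩
  have hconj : ∀ n, (of fun _ j => v n * p j) * diagonal d * (of fun _ j => v n * p j)ᴴ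
      = mOne (v n * (∑ j, p j * d j * star (p j)) * star (v n)) := fun n => by
    ext
    rw [mul_apply]
    simp [mOne, mul_diagonal, Finset.mul_sum, Finset.sum_mul, mul_assoc]
  simpa only [hconj, Function.comp_def] using (continuous_mOne.tendsto b).comp hv

/-- Without a unit there are no permutation matrices; `vₙ a vₙ* → a` stands in for them. -/
lemma CuntzLE.mCuntzLE_diagonal_reindex {a : A} (h : CuntzLE a a) {ι κ : Type*} [Fintype ι]
    [Fintype κ] [DecidableEq ι] [DecidableEq κ] (e : ι ≃ κ) :
    MCuntzLE (diagonal fun _ : ι => a) (diagonal fun _ : κ => a) := by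
  obtain ⟨v, hv⟩ := h.tendsto
  set u : ℕ → Matrix κ κ A := fun n => diagonal fun _ => v n
  refine ⟨fun n => (u n).submatrix e id, ?_⟩
  have hconj : ∀ n, (u n).submatrix e id * (diagonal fun _ => a : Matrix κ κ A)
      * ((u n).submatrix e id)ᴴ = diagonal fun _ : ι => v n * a * star (v n) := fun n => by
    calc (u n).submatrix e id * (diagonal fun _ => a : Matrix κ κ A) * ((u n).submatrix e id)ᴴ
        = (u n * (diagonal fun _ => a : Matrix κ κ A) * (u n)ᴴ).submatrix e e := by
          rw [conjTranspose_submatrix, submatrix_mul _ _ _ id _ Function.bijective_id,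
            submatrix_mul _ _ _ id _ Function.bijective_id, submatrix_id_id]
      _ = diagonal fun _ : ι => v n * a * star (v n) := by
          simp [u, diagonal_conjTranspose, submatrix_diagonal_equiv, Function.comp_def]
  have hdiag : Continuous fun x : A => diagonal fun _ : ι => x := by fun_prop
  simpa only [hconj, Function.comp_def] using (hdiag.tendsto a).comp hv

variable [PartialOrder A] [StarOrderedRing A]

lemma matPos_diagonal {ι : Type*} [Fintype ι] [DecidableEq ι] {d : ι → A} (hd : ∀ i, 0 ≤ d i) :
    MatPos (diagonal d) := by
  refine ⟨diagonal fun i => CFC.sqrt (d i), ?_⟩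
  rw [diagonal_conjTranspose, diagonal_mul_diagonal]
  congr 1
  funext i
  rw [Pi.star_apply, (CFC.sqrt_nonneg (d i)).isSelfAdjoint.star_eq,
    CFC.sqrt_mul_sqrt_self _ (hd i)]

lemma matPos_mOne {b : A} (hb : 0 ≤ b) : MatPos (mOne b) :=
  mOne_eq_diagonal b ▸ matPos_diagonal fun _ => hb

lemma DimFn.diagonal_lt_top (d : DimFn A) {a : A} (ha : 0 ≤ a)
    (hfin : d.d (Fin 1) (mOne a) < ⊤) (n : ℕ) :
    d.d (Fin n) (diagonal fun _ => a) < ⊤ := by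
  induction n with
  | zero => exact (d.mono _ _ _ _ (matPos_of_isEmpty _) (matPos_mOne ha)
      (mCuntzLE_of_isEmpty _ _)).trans_lt hfin
  | succ n ih =>
    calc d.d (Fin (n + 1)) (diagonal fun _ => a)
        ≤ d.d (Fin n ⊕ Fin 1) (diagonal fun _ => a) :=
          d.mono _ _ _ _ (matPos_diagonal fun _ => ha) (matPos_diagonal fun _ => ha)
            ((cuntzLE_of_le_s8 ha le_rfl).mCuntzLE_diagonal_reindex finSumFinEquiv.symm)
      _ = d.d (Fin n) (diagonal fun _ => a) + d.d (Fin 1) (mOne a) := by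
          rw [← Sum.elim_lam_const_lam_const, ← fromBlocks_diagonal, mOne_eq_diagonal]
          exact d.additive _ _ _ _ (matPos_diagonal fun _ => ha) (matPos_diagonal fun _ => ha)
      _ < ⊤ := ENNReal.add_lt_top.mpr ⟨ih, hfin⟩

end MatrixAlgebra

theorem stmt_8_general {A : Type*} [NonUnitalCStarAlgebra A] [PartialOrder A] [StarOrderedRing A]
    (hA : IsSimpleCStar A) (d : DimFn A)
    (a : A) (hapos : 0 ≤ a) (hane : a ≠ 0)
    (hfin : d.d (Fin 1) (mOne a) < ⊤) :
    ∀ b : A, b ∈ pedersenIdeal A → 0 ≤ b → d.d (Fin 1) (mOne b) < ⊤ := by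
  intro b hbP hb
  obtain ⟨n, f, g, hb_eq⟩ := hA.exists_sum_eq_of_mem_pedersenIdeal hapos hane hbP
  have hcuntz : MCuntzLE (mOne b) (diagonal fun _ : Fin n => a) :=
    (cuntzLE_of_le_s8 hb (le_sum_conj_of_eq_sum hapos hb f g hb_eq)).mCuntzLE_mOne_diagonal
  calc d.d (Fin 1) (mOne b) ≤ d.d (Fin n) (diagonal fun _ => a) :=
        d.mono _ _ _ _ (matPos_mOne hb) (matPos_diagonal fun _ => hapos) hcuntz
    _ < ⊤ := d.diagonal_lt_top hapos hfin n

/-- If a nonzero positive element of the Pedersen ideal of a simple C*-algebra has finite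
dimension under a dimension function, then so does every positive element of the Pedersen
ideal. -/
theorem stmt_8 {A : Type*} [NonUnitalCStarAlgebra A] [PartialOrder A] [StarOrderedRing A]
    (hA : IsSimpleCStar A) (d : DimFn A)
    (a : A) (haP : a ∈ pedersenIdeal A) (hapos : 0 ≤ a) (hane : a ≠ 0)
    (hfin : d.d (Fin 1) (mOne a) < ⊤) :
    ∀ b : A, b ∈ pedersenIdeal A → 0 ≤ b → d.d (Fin 1) (mOne b) < ⊤ :=
  stmt_8_general hA d a hapos hane hfin
end

section
/- Let $A$ be a simple C*-algebra. Suppose there exist a dimension function $d$ on $A$ and a positive element $a$ in the Pedersen ideal of $A$ with $0 < d(a) < \infty$. Then every positive element of the Pedersen ideal of $A$ is finite, i.e., there is no nonzero $b \in A_+$ with $a' \oplus b \precsim a'$ for $a'$ a positive element of the Pedersen ideal. -/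
open Filter Topology Matrix
open scoped ENNReal

/-- A positive element `a` of a C*-algebra is finite if there is no nonzero positive `b` with
`a ⊕ b ≾ a` in `M₂(A)` (here realized over the index type `Fin 1 ⊕ Fin 1`). -/
def IsFiniteElt {A : Type*} [NonUnitalCStarAlgebra A] [PartialOrder A] [StarOrderedRing A]
    (a : A) : Prop :=
  ¬ ∃ b : A, 0 ≤ b ∧ b ≠ 0 ∧
      MCuntzLE (Matrix.fromBlocks (mOne a) 0 0 (mOne b)) (mOne a)

/-!
A dimension function `d` is subadditive on positive elements, monotone for `≤`, and satisfies
`d(z q z*) ≤ d(q)`. In a simple C*-algebra the algebraic ideal generated by a nonzero `q ≥ 0` is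
dense, so it contains the Pedersen ideal; every `x` in that ideal satisfies `±(x + x*) ≤ s` for a
finite sum `s` of `q` and of conjugates `z q z*`, whence `d(p) ≤ m · d(q)` for every positive `p`
in the Pedersen ideal. With `q = a` this makes `d(p)` finite, so `p ⊕ b ≾ p` forces `d(b) = 0`;
with `q = b` it then gives `d(a) ≤ m · d(b) = 0`, a contradiction.
-/

section StarRing

variable {R : Type*} [NonUnitalRing R] [StarRing R]

def conjSums (q : R) : AddSubmonoid R :=
  AddSubmonoid.closure (insert q (Set.range fun z => z * q * star z))

lemma star_mul_self_mem_conjSums {r : R} (hr : IsSelfAdjoint r) :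
    star r * r ∈ conjSums (r * r) := by
  rw [hr.star_eq]
  exact AddSubmonoid.subset_closure (Set.mem_insert _ _)

lemma star_mul_mul_mem_conjSums {r : R} (hr : IsSelfAdjoint r) (z : R) :
    star (r * z) * (r * z) ∈ conjSums (r * r) := by
  have h : star z * (r * r) * star (star z) ∈ conjSums (r * r) :=
    AddSubmonoid.subset_closure (Set.mem_insert_of_mem _ ⟨star z, rfl⟩)
  simpa only [star_mul, star_star, hr.star_eq, mul_assoc] using h

end StarRing

section StarOrderedRing

variable {R : Type*} [NonUnitalRing R] [PartialOrder R] [StarRing R] [StarOrderedRing R]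

lemma star_mul_add_star_mul_le (x y : R) :
    star x * y + star y * x ≤ star x * x + star y * y := by
  rw [← sub_nonneg]
  convert star_mul_self_nonneg (x - y) using 1
  simp only [star_sub, sub_mul, mul_sub]
  abel

lemma neg_star_mul_add_star_mul_le (x y : R) :
    -(star x * y + star y * x) ≤ star x * x + star y * y := by
  have h := star_mul_add_star_mul_le (-x) y
  rwa [star_neg, neg_mul, mul_neg, neg_mul_neg, ← neg_add] at h

def conjSumsDominated (q : R) : AddSubgroup R where
  carrier := {x | ∃ s ∈ conjSums q, x + star x ≤ s ∧ -(x + star x) ≤ s}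
  zero_mem' := ⟨0, zero_mem _, by simp, by simp⟩
  add_mem' := by
    rintro x y ⟨s, hs, hxs, hxs'⟩ ⟨t, ht, hyt, hyt'⟩
    refine ⟨s + t, add_mem hs ht, ?_, ?_⟩
    · calc x + y + star (x + y) = (x + star x) + (y + star y) := by rw [star_add]; abel
        _ ≤ s + t := add_le_add hxs hyt
    · calc -(x + y + star (x + y)) = -(x + star x) + -(y + star y) := by rw [star_add]; abel
        _ ≤ s + t := add_le_add hxs' hyt'
  neg_mem' := by
    rintro x ⟨s, hs, hxs, hxs'⟩
    exact ⟨s, hs, by rwa [star_neg, ← neg_add], by rwa [star_neg, ← neg_add, neg_neg]⟩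

lemma mem_conjSumsDominated_of_eq {q x : R} (X Y : R)
    (hx : x + star x = star X * Y + star Y * X)
    (hX : star X * X ∈ conjSums q) (hY : star Y * Y ∈ conjSums q) :
    x ∈ conjSumsDominated q :=
  ⟨_, add_mem hX hY, hx ▸ star_mul_add_star_mul_le X Y, hx ▸ neg_star_mul_add_star_mul_le X Y⟩

/-- With `q = r r`, a generator `u q w` of the ideal (`u` or `w` possibly absent) has
`x + x* = X* Y + Y* X` for `X = r u*`, `Y = r w`. -/
lemma mem_conjSumsDominated_of_mem_span {r x : R} (hr : IsSelfAdjoint r)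
    (hx : x ∈ TwoSidedIdeal.span {r * r}) : x ∈ conjSumsDominated (r * r) := by
  rw [TwoSidedIdeal.mem_span_iff_mem_addSubgroup_closure_nonunital] at hx
  refine (AddSubgroup.closure_le _).mpr ?_ hx
  have hrr := star_mul_self_mem_conjSums hr
  have hrz := star_mul_mul_mem_conjSums hr
  rintro _ (((rfl | ⟨_, rfl, w, -, rfl⟩) | ⟨u, -, _, rfl, rfl⟩) |
    ⟨-, ⟨u, -, _, rfl, rfl⟩, w, -, rfl⟩)
  · exact mem_conjSumsDominated_of_eq r r (by simp only [star_mul, hr.star_eq]) hrr hrr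
  · exact mem_conjSumsDominated_of_eq r (r * w)
      (by simp only [star_mul, hr.star_eq, mul_assoc]) hrr (hrz w)
  · exact mem_conjSumsDominated_of_eq (r * star u) r
      (by simp only [star_mul, star_star, hr.star_eq, mul_assoc]) (hrz _) hrr
  · exact mem_conjSumsDominated_of_eq (r * star u) (r * w)
      (by simp only [star_mul, star_star, hr.star_eq, mul_assoc]) (hrz _) (hrz w)

end StarOrderedRing

namespace TwoSidedIdeal

variable {R : Type*} [NonUnitalRing R] [TopologicalSpace R] [IsTopologicalRing R]

def topologicalClosure_s9 (I : TwoSidedIdeal R) : TwoSidedIdeal R :=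
  .mk' (closure I) (subset_closure I.zero_mem)
    (fun hx hy => map_mem_closure₂ continuous_add hx hy fun _ ha _ hb => I.add_mem ha hb)
    (fun hx => map_mem_closure continuous_neg hx fun _ ha => I.neg_mem ha)
    (fun {x _} hy => map_mem_closure (continuous_const_mul x) hy fun _ ha => I.mul_mem_left x _ ha)
    (fun {_ y} hx => map_mem_closure (f := (· * y)) (continuous_mul_const y) hx
      fun _ ha => I.mul_mem_right _ y ha)

lemma coe_topologicalClosure_s9 (I : TwoSidedIdeal R) :
    (I.topologicalClosure_s9 : Set R) = closure I :=
  coe_mk' _ _ _ _ _ _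

end TwoSidedIdeal

lemma sq_div_one_add_mul_le_one {n t : ℝ} (hn : 0 ≤ n) (ht : 0 ≤ t) :
    (n * t / (1 + n * t)) ^ 2 ≤ 1 := by
  have : 0 ≤ n * t := mul_nonneg hn ht
  rw [div_pow, div_le_one (by positivity)]
  nlinarith

lemma abs_one_sub_sq_div_mul_le {n t : ℝ} (hn : 0 < n) (ht : 0 ≤ t) :
    |(1 - (n * t / (1 + n * t)) ^ 2) * t| ≤ 2 / n := by
  have hnt : 0 ≤ n * t := mul_nonneg hn.le ht
  have h : (1 - (n * t / (1 + n * t)) ^ 2) * t = t * (1 + 2 * (n * t)) / (1 + n * t) ^ 2 := by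
    field_simp
    ring
  rw [h, abs_of_nonneg (by positivity), div_le_div_iff₀ (by positivity) hn]
  nlinarith [mul_nonneg hnt ht]

section CStarAlgebra

variable {A : Type*} [NonUnitalCStarAlgebra A]

lemma conjTranspose_mOne (x : A) : (mOne x)ᴴ = mOne (star x) := by
  ext
  simp [mOne]

lemma mOne_mul_mOne (x y : A) : mOne x * mOne y = mOne (x * y) := by
  ext
  simp [mOne, Matrix.mul_apply]

lemma mCuntzLE_mOne_of_tendsto {x c : A} {v : ℕ → A}
    (hv : Tendsto (fun n => v n * c * star (v n)) atTop (𝓝 x)) : MCuntzLE (mOne x) (mOne c) :=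
  ⟨fun n => mOne (v n), by
    simpa only [conjTranspose_mOne, mOne_mul_mOne, Function.comp_def] using
      (continuous_mOne.tendsto x).comp hv⟩

lemma mCuntzLE_mOne_conj (q z : A) : MCuntzLE (mOne (z * q * star z)) (mOne q) :=
  mCuntzLE_mOne_of_tendsto tendsto_const_nhds

lemma MCuntzLE.add_fromBlocks {ι κ κ' : Type*} [Fintype ι] [Fintype κ] [Fintype κ']
    {a b : Matrix ι ι A} {a' : Matrix κ κ A} {b' : Matrix κ' κ' A}
    (ha : MCuntzLE a a') (hb : MCuntzLE b b') : MCuntzLE (a + b) (fromBlocks a' 0 0 b') := by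
  obtain ⟨v, hv⟩ := ha
  obtain ⟨w, hw⟩ := hb
  refine ⟨fun n => fromCols (v n) (w n), ?_⟩
  convert hv.add hw using 2 with n
  ext i j
  simp [Matrix.mul_apply, Fintype.sum_sum_type, Finset.sum_mul]

lemma IsSimpleCStar.dense_span_singleton (hA : IsSimpleCStar A) {q : A} (hq : q ≠ 0) :
    Dense (TwoSidedIdeal.span {q} : Set A) := by
  rw [dense_iff_closure_eq, ← TwoSidedIdeal.coe_topologicalClosure_s9]
  have hclosed : IsClosed ((TwoSidedIdeal.span {q}).topologicalClosure_s9 : Set A) := by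
    rw [TwoSidedIdeal.coe_topologicalClosure_s9]
    exact isClosed_closure
  rcases hA.2 _ hclosed with h | h
  · refine absurd ?_ hq
    rw [← TwoSidedIdeal.mem_bot, ← h, ← SetLike.mem_coe, TwoSidedIdeal.coe_topologicalClosure_s9]
    exact subset_closure (TwoSidedIdeal.subset_span rfl)
  · rw [h, TwoSidedIdeal.coe_top]

lemma IsSimpleCStar.pedersenIdeal_subset_span (hA : IsSimpleCStar A) {q : A} (hq : q ≠ 0) :
    pedersenIdeal A ⊆ TwoSidedIdeal.span {q} :=
  fun _ hp => hp _ (hA.dense_span_singleton hq)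

end CStarAlgebra

section CStarAlgebraOrder

variable {A : Type*} [NonUnitalCStarAlgebra A] [PartialOrder A] [StarOrderedRing A]

/-- In the unitization, `x - √x f(c) √x = (√x ρ)(√x ρ)*` with `ρ = √(1 - f(c))`, and
`‖ρ x ρ‖ ≤ ‖ρ c ρ‖` because `x ≤ c`. -/
lemma norm_sub_sqrt_mul_cfcₙ_mul_sqrt_le {x c : A} (hx : 0 ≤ x) (hxc : x ≤ c) {f : ℝ → ℝ}
    (hf : ContinuousOn f (quasispectrum ℝ c)) (hf0 : f 0 = 0)
    (hf1 : ∀ t ∈ quasispectrum ℝ c, f t ≤ 1) :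
    ‖x - CFC.sqrt x * cfcₙ f c * CFC.sqrt x‖ ≤ ‖cfcₙ (fun t => (1 - f t) * t) c‖ := by
  rw [Unitization.quasispectrum_eq_spectrum_inr' ℝ ℂ c] at hf hf1
  have hc : IsSelfAdjoint (c : Unitization ℂ A) := (hx.trans hxc).isSelfAdjoint.inr ℂ
  set s : Unitization ℂ A := ((CFC.sqrt x : A) : Unitization ℂ A)
  set ρ := cfc (fun t => √(1 - f t)) (c : Unitization ℂ A)
  have hs : IsSelfAdjoint s := (CFC.sqrt_nonneg x).isSelfAdjoint.inr ℂ
  have hss : s * s = x := by rw [← Unitization.inr_mul, CFC.sqrt_mul_sqrt_self x hx]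
  have hρ : IsSelfAdjoint ρ := cfc_predicate _ _
  have hρρ : ρ * ρ = 1 - cfc f (c : Unitization ℂ A) := by
    rw [← cfc_mul .., ← cfc_one ℝ (c : Unitization ℂ A), ← cfc_sub ..]
    exact cfc_congr fun t ht => Real.mul_self_sqrt (sub_nonneg.2 (hf1 t ht))
  have hρcρ : ρ * c * ρ = cfc (fun t => (1 - f t) * t) (c : Unitization ℂ A) := by
    conv_lhs => rw [← cfc_id' ℝ (c : Unitization ℂ A)]
    rw [← cfc_mul .., ← cfc_mul ..]
    refine cfc_congr fun t ht => ?_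
    have := Real.mul_self_sqrt (sub_nonneg.2 (hf1 t ht))
    linear_combination t * this
  have key : ((x - CFC.sqrt x * cfcₙ f c * CFC.sqrt x : A) : Unitization ℂ A)
      = s * ρ * star (s * ρ) := by
    rw [star_mul, hρ.star_eq, hs.star_eq, Unitization.inr_sub, Unitization.inr_mul,
      Unitization.inr_mul, Unitization.real_cfcₙ_eq_cfc_inr c f hf0]
    calc (x : Unitization ℂ A) - s * cfc f (c : Unitization ℂ A) * s
        = s * (1 - cfc f (c : Unitization ℂ A)) * s := by rw [mul_sub, sub_mul, mul_one, hss]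
      _ = s * ρ * (ρ * s) := by rw [← hρρ]; noncomm_ring
  calc ‖x - CFC.sqrt x * cfcₙ f c * CFC.sqrt x‖
      = ‖star (s * ρ) * (s * ρ)‖ := by
        rw [← Unitization.norm_inr (𝕜 := ℂ), key, CStarRing.norm_self_mul_star,
          CStarRing.norm_star_mul_self]
    _ = ‖ρ * x * ρ‖ := by
        rw [star_mul, hρ.star_eq, hs.star_eq, ← hss]
        noncomm_ring
    _ ≤ ‖ρ * c * ρ‖ :=
        CStarAlgebra.norm_le_norm_of_nonneg_of_le
          (hρ.conjugate_nonneg (Unitization.inr_nonneg_iff.2 hx))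
          (hρ.conjugate_le_conjugate ((Unitization.inr_le_iff x c).2 hxc))
    _ = ‖cfcₙ (fun t => (1 - f t) * t) c‖ := by
        rw [hρcρ, ← Unitization.real_cfcₙ_eq_cfc_inr c _ (by simp), Unitization.norm_inr]

/-- The witnesses are `√x · kₙ(c)` with `kₙ(t) = n √t / (1 + n t)`: then `kₙ(t)² t` is
`Fₙ(t) = (n t / (1 + n t))²`, and `(1 - Fₙ(t)) t ≤ 2 / n` uniformly in `t ≥ 0`. -/
lemma mCuntzLE_mOne_of_le {x c : A} (hx : 0 ≤ x) (hxc : x ≤ c) : MCuntzLE (mOne x) (mOne c) := by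
  have hc' : IsSelfAdjoint c := (hx.trans hxc).isSelfAdjoint
  have hc := quasispectrum_nonneg_of_nonneg (𝕜 := ℝ) c (hx.trans hxc)
  set k : ℕ → ℝ → ℝ := fun n t => n * √t / (1 + n * t)
  set F : ℕ → ℝ → ℝ := fun n t => (n * t / (1 + n * t)) ^ 2
  have hk (n : ℕ) : ContinuousOn (k n) (quasispectrum ℝ c) :=
    ContinuousOn.div (by fun_prop) (by fun_prop) fun t ht => by
      have := hc t ht; positivity
  have hF (n : ℕ) : ContinuousOn (F n) (quasispectrum ℝ c) :=
    (ContinuousOn.div (by fun_prop) (by fun_prop) fun t ht => by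
      have := hc t ht; positivity).pow 2
  have hkck (n : ℕ) : cfcₙ (k n) c * c * cfcₙ (k n) c = cfcₙ (F n) c := by
    have hk0 : k n 0 = 0 := by simp [k]
    have hFk : (quasispectrum ℝ c).EqOn (F n) (fun t => k n t * t * k n t) := fun t ht => by
      have hsq := Real.mul_self_sqrt (hc t ht)
      simp only [k, F]
      rw [div_pow, div_mul_eq_mul_div, div_mul_div_comm, ← sq]
      congr 1
      linear_combination -((n : ℝ) ^ 2 * t) * hsq
    rw [cfcₙ_congr hFk,
      cfcₙ_mul (fun t => k n t * t) (k n) c ((hk n).mul continuousOn_id) (by simp [hk0]) (hk n) hk0,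
      cfcₙ_mul (k n) (fun t => t) c (hk n) hk0, cfcₙ_id' ℝ c]
  refine mCuntzLE_mOne_of_tendsto (v := fun n => CFC.sqrt x * cfcₙ (k n) c) ?_
  rw [tendsto_iff_norm_sub_tendsto_zero]
  refine squeeze_zero' (Eventually.of_forall fun _ => norm_nonneg _)
    (eventually_atTop.2 ⟨1, fun n hn => ?_⟩) (tendsto_const_div_atTop_nhds_zero_nat 2)
  have hn : (0 : ℝ) < n := by exact_mod_cast hn
  calc ‖CFC.sqrt x * cfcₙ (k n) c * c * star (CFC.sqrt x * cfcₙ (k n) c) - x‖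
      = ‖x - CFC.sqrt x * cfcₙ (F n) c * CFC.sqrt x‖ := by
        rw [norm_sub_rev, star_mul, (cfcₙ_predicate (k n) c).star_eq,
          (CFC.sqrt_nonneg x).isSelfAdjoint.star_eq, ← hkck]
        noncomm_ring
    _ ≤ ‖cfcₙ (fun t => (1 - F n t) * t) c‖ :=
        norm_sub_sqrt_mul_cfcₙ_mul_sqrt_le hx hxc (hF n) (by simp [F])
          fun t ht => sq_div_one_add_mul_le_one hn.le (hc t ht)
    _ ≤ 2 / n := norm_cfcₙ_le fun t ht => abs_one_sub_sq_div_mul_le hn (hc t ht)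

lemma matPos_mOne_s9 {x : A} (hx : 0 ≤ x) : MatPos (mOne x) :=
  ⟨mOne (CFC.sqrt x), by
    rw [conjTranspose_mOne, (CFC.sqrt_nonneg x).isSelfAdjoint.star_eq, mOne_mul_mOne,
      CFC.sqrt_mul_sqrt_self x hx]⟩

lemma matPos_fromBlocks_mOne {x y : A} (hx : 0 ≤ x) (hy : 0 ≤ y) :
    MatPos (fromBlocks (mOne x) 0 0 (mOne y)) := by
  obtain ⟨a, ha⟩ := matPos_mOne_s9 hx
  obtain ⟨b, hb⟩ := matPos_mOne_s9 hy
  exact ⟨fromBlocks a 0 0 b, by simp [fromBlocks_conjTranspose, fromBlocks_multiply, ha, hb]⟩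

end CStarAlgebraOrder

namespace DimFn

variable {A : Type*} [NonUnitalCStarAlgebra A] [PartialOrder A] [StarOrderedRing A] (D : DimFn A)

def d₁ (x : A) : ℝ≥0∞ := D.d (Fin 1) (mOne x)

lemma d₁_mono {x y : A} (hx : 0 ≤ x) (hy : 0 ≤ y) (h : MCuntzLE (mOne x) (mOne y)) :
    D.d₁ x ≤ D.d₁ y :=
  D.mono _ _ _ _ (matPos_mOne_s9 hx) (matPos_mOne_s9 hy) h

lemma d₁_le_of_le {x y : A} (hx : 0 ≤ x) (hxy : x ≤ y) : D.d₁ x ≤ D.d₁ y :=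
  D.d₁_mono hx (hx.trans hxy) (mCuntzLE_mOne_of_le hx hxy)

lemma d₁_add_le {x y : A} (hx : 0 ≤ x) (hy : 0 ≤ y) : D.d₁ (x + y) ≤ D.d₁ x + D.d₁ y := by
  rw [d₁, d₁, d₁, ← D.additive _ _ _ _ (matPos_mOne_s9 hx) (matPos_mOne_s9 hy)]
  exact D.mono _ _ _ _ (matPos_mOne_s9 (add_nonneg hx hy)) (matPos_fromBlocks_mOne hx hy)
    ((mCuntzLE_mOne_of_le hx le_rfl).add_fromBlocks (mCuntzLE_mOne_of_le hy le_rfl))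

lemma d₁_eq_zero_of_mCuntzLE {x y : A} (hx : 0 ≤ x) (hy : 0 ≤ y) (hfin : D.d₁ x ≠ ⊤)
    (h : MCuntzLE (fromBlocks (mOne x) 0 0 (mOne y)) (mOne x)) : D.d₁ y = 0 := by
  have hle : D.d₁ x + D.d₁ y ≤ D.d₁ x + 0 := by
    rw [add_zero, d₁, d₁, ← D.additive _ _ _ _ (matPos_mOne_s9 hx) (matPos_mOne_s9 hy)]
    exact D.mono _ _ _ _ (matPos_fromBlocks_mOne hx hy) (matPos_mOne_s9 hx) h
  exact nonpos_iff_eq_zero.1 (ENNReal.le_of_add_le_add_left hfin hle)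

lemma d₁_zero_eq_zero_or_top : D.d₁ 0 = 0 ∨ D.d₁ 0 = ⊤ :=
  or_iff_not_imp_right.2 fun htop => D.d₁_eq_zero_of_mCuntzLE le_rfl le_rfl htop
    ⟨0, by simp [show mOne (0 : A) = 0 from rfl]⟩

lemma exists_d₁_le_mul_of_mem_conjSums {q s : A} (hq : 0 ≤ q) (hs : s ∈ conjSums q) :
    0 ≤ s ∧ ∃ m : ℕ, D.d₁ s ≤ m * D.d₁ q := by
  induction hs using AddSubmonoid.closure_induction with
  | mem s hs =>
    rcases hs with rfl | ⟨z, rfl⟩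
    · exact ⟨hq, 1, by simp⟩
    · have hz := star_right_conjugate_nonneg hq z
      exact ⟨hz, 1, by simpa using D.d₁_mono hz hq (mCuntzLE_mOne_conj q z)⟩
  | zero => exact ⟨le_rfl, 1, by simpa using D.d₁_le_of_le le_rfl hq⟩
  | add s t _ _ hs ht =>
    obtain ⟨hs, m, hm⟩ := hs
    obtain ⟨ht, n, hn⟩ := ht
    refine ⟨add_nonneg hs ht, m + n, (D.d₁_add_le hs ht).trans ?_⟩
    rw [Nat.cast_add, add_mul]
    exact add_le_add hm hn

lemma exists_d₁_le_mul_of_mem_span {p q : A} (hq : 0 ≤ q) (hp : 0 ≤ p)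
    (hpq : p ∈ TwoSidedIdeal.span {q}) : ∃ m : ℕ, D.d₁ p ≤ m * D.d₁ q := by
  obtain ⟨r, hr, rfl⟩ : ∃ r : A, IsSelfAdjoint r ∧ r * r = q :=
    ⟨CFC.sqrt q, (CFC.sqrt_nonneg q).isSelfAdjoint, CFC.sqrt_mul_sqrt_self q hq⟩
  obtain ⟨s, hs, hps, -⟩ := mem_conjSumsDominated_of_mem_span hr hpq
  obtain ⟨-, m, hm⟩ := D.exists_d₁_le_mul_of_mem_conjSums hq hs
  have hps' : p ≤ s := calc
    p ≤ p + star p := le_add_of_nonneg_right (star_nonneg_iff.2 hp)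
    _ ≤ s := hps
  exact ⟨m, (D.d₁_le_of_le hp hps').trans hm⟩

end DimFn

/-- If a simple C*-algebra admits a dimension function taking a finite nonzero value on some
positive element of the Pedersen ideal, then every positive element of the Pedersen ideal is
finite. -/
theorem stmt_9 {A : Type*} [NonUnitalCStarAlgebra A] [PartialOrder A] [StarOrderedRing A]
    (hA : IsSimpleCStar A)
    (hd : ∃ (d : DimFn A) (a : A), a ∈ pedersenIdeal A ∧ 0 ≤ a ∧
      0 < d.d (Fin 1) (mOne a) ∧ d.d (Fin 1) (mOne a) < ⊤) :
    ∀ a' : A, a' ∈ pedersenIdeal A → 0 ≤ a' → IsFiniteElt a' := by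
  obtain ⟨D, a, ha, ha0, hpos, hfin⟩ := hd
  change 0 < D.d₁ a at hpos
  change D.d₁ a < ⊤ at hfin
  have ha_ne : a ≠ 0 := by
    rintro rfl
    rcases D.d₁_zero_eq_zero_or_top with h | h
    · exact hpos.ne' h
    · exact hfin.ne h
  rintro p hp hp0 ⟨b, hb0, hb_ne, hpb⟩
  obtain ⟨m, hm⟩ :=
    D.exists_d₁_le_mul_of_mem_span ha0 hp0 (hA.pedersenIdeal_subset_span ha_ne hp)
  have hp_fin : D.d₁ p ≠ ⊤ :=
    ne_top_of_le_ne_top (ENNReal.mul_ne_top (ENNReal.natCast_ne_top m) hfin.ne) hm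
  have hb : D.d₁ b = 0 := D.d₁_eq_zero_of_mCuntzLE hp0 hb0 hp_fin hpb
  obtain ⟨n, hn⟩ :=
    D.exists_d₁_le_mul_of_mem_span hb0 ha0 (hA.pedersenIdeal_subset_span hb_ne ha)
  rw [hb, mul_zero] at hn
  exact hpos.not_ge hn
end

section
/- Let $A$ be a C*-algebra such that the ordered semigroup $W(A)$ is almost unperforated, and suppose $a, b \in M_\infty(A)_+$ satisfy: there exist $m, n \in \mathbb{N}$ with $n > m$ and $n\langle a \rangle \leq m \langle b \rangle$ in $W(A)$. Then $a \precsim b$. Conversely, if $A$ has weak strict comparison, then $W(A)$ is almost unperforated, provided every nonzero dimension function on $A$ is strictly positive on nonzero positive elements (e.g. $A$ simple). -/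
open Filter Topology Matrix
open scoped ENNReal

section Aux
set_option linter.unusedSectionVars false
variable {A : Type*} [NonUnitalCStarAlgebra A] [PartialOrder A] [StarOrderedRing A]

lemma tendsto_matrix_iff {α ι κ : Type*} {l : Filter α} {F : α → Matrix ι κ A}
    {a : Matrix ι κ A} :
    Tendsto F l (𝓝 a) ↔ ∀ i j, Tendsto (fun x => F x i j) l (𝓝 (a i j)) := by
  constructor
  · intro h i j
    exact ((continuous_apply j).tendsto _).comp (((continuous_apply i).tendsto _).comp h)
  · intro h
    exact tendsto_pi_nhds.mpr fun i => tendsto_pi_nhds.mpr fun j => h i j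

lemma mCuntzLE_of_tendsto {ι κ : Type*} [Fintype ι] [Fintype κ]
    {a : Matrix ι ι A} {b : Matrix κ κ A} {α : Type*} {l : Filter α} [l.NeBot]
    {F : α → Matrix ι κ A} (h : Tendsto (fun x => F x * b * (F x)ᴴ) l (𝓝 a)) :
    MCuntzLE a b := by
  have h' := tendsto_matrix_iff.mp h
  have hS : ∀ n : ℕ, ∃ x : α, ∀ i j, dist ((F x * b * (F x)ᴴ) i j) (a i j) < 1 / (n + 1) := by
    intro n
    have hmem : ∀ᶠ x in l, ∀ i j, dist ((F x * b * (F x)ᴴ) i j) (a i j) < 1 / (n + 1) :=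
      Filter.eventually_all.2 fun i => Filter.eventually_all.2 fun j =>
        Metric.tendsto_nhds.mp (h' i j) _ (by positivity)
    exact (Filter.nonempty_of_mem hmem).imp fun x hx => hx
  choose x hx using hS
  refine ⟨fun n => F (x n), tendsto_matrix_iff.mpr fun i j => ?_⟩
  rw [tendsto_iff_dist_tendsto_zero]
  apply squeeze_zero (fun n => dist_nonneg) (fun n => (hx n i j).le)
  exact tendsto_one_div_add_atTop_nhds_zero_nat

lemma tendsto_conj_approxUnit (x : A) :
    Tendsto (fun u : A => u * x * u) (CStarAlgebra.approximateUnit A) (𝓝 x) := by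
  have hiu := CStarAlgebra.increasingApproximateUnit A
  have h1 : Tendsto (fun u : A => x * u) (CStarAlgebra.approximateUnit A) (𝓝 x) :=
    hiu.tendsto_mul_left x
  have h2 : Tendsto (fun u : A => u * x) (CStarAlgebra.approximateUnit A) (𝓝 x) :=
    hiu.tendsto_mul_right x
  have key : Tendsto (fun u : A => u * (x * u - x)) (CStarAlgebra.approximateUnit A) (𝓝 0) := by
    apply squeeze_zero_norm' (a := fun u : A => ‖x * u - x‖)
    · filter_upwards [hiu.eventually_norm] with u hu
      calc ‖u * (x * u - x)‖ ≤ ‖u‖ * ‖x * u - x‖ := norm_mul_le _ _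
        _ ≤ 1 * ‖x * u - x‖ := by gcongr
        _ = ‖x * u - x‖ := one_mul _
    · simpa using (tendsto_iff_norm_sub_tendsto_zero.mp h1)
  have := key.add h2
  rw [zero_add] at this
  convert this using 2 with u
  noncomm_ring

lemma mCuntzLE_submatrix {ι κ : Type*} [Fintype ι] [Fintype κ] [DecidableEq ι]
    (a : Matrix ι ι A) (e : κ ≃ ι) : MCuntzLE (a.submatrix e e) a := by
  haveI : (CStarAlgebra.approximateUnit A).NeBot :=
    (CStarAlgebra.increasingApproximateUnit A).neBot
  set V : A → Matrix κ ι A := fun u => Matrix.of fun i j => if j = e i then u else 0 with hV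
  apply mCuntzLE_of_tendsto (l := CStarAlgebra.approximateUnit A) (F := V)
  rw [tendsto_matrix_iff]
  intro i j
  have hentry : ∀ u : A, (V u * a * (V u)ᴴ) i j = u * a (e i) (e j) * star u := by
    intro u
    simp [Matrix.mul_apply, hV, apply_ite, Finset.sum_ite_eq]
  simp only [hentry]
  have : ∀ᶠ u in CStarAlgebra.approximateUnit A,
      u * a (e i) (e j) * star u = u * a (e i) (e j) * u := by
    filter_upwards [(CStarAlgebra.increasingApproximateUnit A).eventually_star_eq] with u hu
    rw [hu]
  refine Tendsto.congr' (by filter_upwards [this] with u hu using hu.symm) ?_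
  simpa [Matrix.submatrix_apply] using tendsto_conj_approxUnit (a (e i) (e j))

lemma matPos_submatrix {ι κ : Type*} [Fintype ι] [Fintype κ] {a : Matrix ι ι A}
    (h : MatPos a) (e : κ ≃ ι) : MatPos (a.submatrix e e) := by
  obtain ⟨c, rfl⟩ := h
  exact ⟨c.submatrix e e, by rw [Matrix.conjTranspose_submatrix, Matrix.submatrix_mul_equiv]⟩

lemma matPos_fromBlocks {ι κ : Type*} [Fintype ι] [Fintype κ] {a : Matrix ι ι A}
    {b : Matrix κ κ A} (ha : MatPos a) (hb : MatPos b) :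
    MatPos (Matrix.fromBlocks a 0 0 b) := by
  obtain ⟨c, rfl⟩ := ha
  obtain ⟨c', rfl⟩ := hb
  refine ⟨Matrix.fromBlocks c 0 0 c', ?_⟩
  simp [Matrix.fromBlocks_conjTranspose, Matrix.fromBlocks_multiply]

lemma matPos_nCopies {ι : Type*} [Fintype ι] [DecidableEq ι] {a : Matrix ι ι A}
    (h : MatPos a) (n : ℕ) : MatPos (nCopies n a) := by
  obtain ⟨c, rfl⟩ := h
  refine ⟨nCopies n c, ?_⟩
  unfold nCopies
  rw [Matrix.blockDiagonal_conjTranspose, Matrix.blockDiagonal_mul]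

lemma nCopies_one_eq {ι : Type*} [Fintype ι] [DecidableEq ι] (a : Matrix ι ι A) :
    nCopies 1 a = a.submatrix (fun p : ι × Fin 1 => p.1) (fun p : ι × Fin 1 => p.1) := by
  ext ⟨i, s⟩ ⟨j, t⟩
  simp [nCopies, Matrix.blockDiagonal_apply, Subsingleton.elim s t]

def copyEquiv (ι : Type*) (k : ℕ) : ((ι × Fin k) ⊕ (ι × Fin 1)) ≃ ι × Fin (k + 1) :=
  (Equiv.prodSumDistrib ι (Fin k) (Fin 1)).symm.trans
    ((Equiv.refl ι).prodCongr finSumFinEquiv)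

lemma nCopies_succ_eq {ι : Type*} [Fintype ι] [DecidableEq ι] (a : Matrix ι ι A) (k : ℕ) :
    (nCopies (k + 1) a).submatrix (copyEquiv ι k) (copyEquiv ι k)
      = Matrix.fromBlocks (nCopies k a) 0 0 (nCopies 1 a) := by
  ext x y
  rcases x with (⟨i, s⟩ | ⟨i, s⟩) <;> rcases y with (⟨j, t⟩ | ⟨j, t⟩) <;>
    simp only [copyEquiv, nCopies, Matrix.submatrix_apply, Equiv.trans_apply,
      Equiv.prodSumDistrib_symm_apply_left, Equiv.prodSumDistrib_symm_apply_right,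
      Equiv.prodCongr_apply, Equiv.coe_refl, Prod.map_apply, id_eq,
      finSumFinEquiv_apply_left, finSumFinEquiv_apply_right,
      Matrix.blockDiagonal_apply, Matrix.fromBlocks_apply₁₁, Matrix.fromBlocks_apply₁₂,
      Matrix.fromBlocks_apply₂₁, Matrix.fromBlocks_apply₂₂, Matrix.zero_apply] <;>
    split_ifs with h h' <;>
    first
      | rfl
      | (exfalso; simp_all [Fin.ext_iff]; try omega)
      | (simp_all [Fin.ext_iff]; try omega)


end Aux

/-- `a` lies in the closed two-sided ideal generated by `b` (for elements of matrix algebras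
over `A`, phrased entrywise: each entry of `a` lies in the closure of the two-sided ideal of `A`
generated by the entries of `b`). -/
def InClosedIdealGen {A : Type*} [NonUnitalCStarAlgebra A] {ι κ : Type*} [Fintype ι] [Fintype κ]
    (a : Matrix ι ι A) (b : Matrix κ κ A) : Prop :=
  ∀ i j, a i j ∈ closure (TwoSidedIdeal.span {x : A | ∃ k l, b k l = x} : Set A)

section Aux2
set_option linter.unusedSectionVars false
variable {A : Type*} [NonUnitalCStarAlgebra A] [PartialOrder A] [StarOrderedRing A]

lemma d_submatrix (d : DimFn A) {ι κ : Type} [Fintype ι] [Fintype κ] [DecidableEq ι]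
    [DecidableEq κ] (a : Matrix ι ι A) (ha : MatPos a) (e : κ ≃ ι) :
    d.d κ (a.submatrix e e) = d.d ι a := by
  refine le_antisymm (d.mono _ _ _ _ (matPos_submatrix ha e) ha (mCuntzLE_submatrix a e)) ?_
  have h2 : a = (a.submatrix e e).submatrix e.symm e.symm := by
    simp [Matrix.submatrix_submatrix]
  refine d.mono _ _ _ _ ha (matPos_submatrix ha e) ?_
  have h3 := mCuntzLE_submatrix (a.submatrix e e) e.symm
  rwa [← h2] at h3

lemma nCopies_one_eq' {ι : Type*} [Fintype ι] [DecidableEq ι] (a : Matrix ι ι A) :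
    nCopies 1 a = a.submatrix (Equiv.prodUnique ι (Fin 1)) (Equiv.prodUnique ι (Fin 1)) := by
  ext ⟨i, s⟩ ⟨j, t⟩
  simp [nCopies, Matrix.blockDiagonal_apply, Subsingleton.elim s t, Equiv.prodUnique]

lemma d_one (d : DimFn A) {ι : Type} [Fintype ι] [DecidableEq ι]
    (a : Matrix ι ι A) (ha : MatPos a) :
    d.d (ι × Fin 1) (nCopies 1 a) = d.d ι a := by
  rw [nCopies_one_eq' a, d_submatrix d a ha (Equiv.prodUnique ι (Fin 1))]

lemma d_nCopies (d : DimFn A) {ι : Type} [Fintype ι] [DecidableEq ι]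
    (a : Matrix ι ι A) (ha : MatPos a) (k : ℕ) :
    d.d (ι × Fin (k + 1)) (nCopies (k + 1) a) = (k + 1 : ℕ) * d.d ι a := by
  induction k with
  | zero => rw [d_one d a ha]; simp
  | succ k ih =>
    have h1 : d.d _ ((nCopies (k + 1 + 1) a).submatrix (copyEquiv ι (k + 1)) (copyEquiv ι (k + 1)))
        = d.d _ (nCopies (k + 1 + 1) a) :=
      d_submatrix d _ (matPos_nCopies ha _) _
    rw [← h1, nCopies_succ_eq a (k + 1),
      d.additive _ _ _ _ (matPos_nCopies ha _) (matPos_nCopies ha _), ih]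
    rw [d_one d a ha]
    push_cast
    ring


lemma inClosedIdealGen_of_mCuntzLE {ι κ : Type} [Fintype ι] [Fintype κ] [DecidableEq ι]
    [DecidableEq κ] {a : Matrix ι ι A} {b : Matrix κ κ A} {m n : ℕ} (hn : 0 < n)
    (h : MCuntzLE (nCopies n a) (nCopies m b)) : InClosedIdealGen a b := by
  intro i j
  obtain ⟨v, hv⟩ := h
  set I := TwoSidedIdeal.span {x : A | ∃ k l, b k l = x} with hI
  set x : ι × Fin n := (i, ⟨0, hn⟩)
  set y : ι × Fin n := (j, ⟨0, hn⟩)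
  have hxy : nCopies n a x y = a i j := by
    simp [nCopies, Matrix.blockDiagonal_apply, x, y]
  have hten : Tendsto (fun p => (v p * nCopies m b * (v p)ᴴ) x y) atTop (𝓝 (a i j)) := by
    rw [← hxy]
    exact tendsto_matrix_iff.mp hv x y
  refine mem_closure_of_tendsto hten (Filter.Eventually.of_forall fun p => ?_)
  show _ ∈ (I : Set A)
  rw [Matrix.mul_apply]
  refine I.finsetSum_mem _ _ fun k _ => ?_
  refine I.mul_mem_right _ _ ?_
  rw [Matrix.mul_apply]
  refine I.finsetSum_mem _ _ fun l _ => ?_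
  refine I.mul_mem_left _ _ ?_
  rcases l with ⟨l1, l2⟩
  rcases k with ⟨k1, k2⟩
  by_cases hlk : l2 = k2
  · have : nCopies m b (l1, l2) (k1, k2) = b l1 k1 := by
      simp [nCopies, Matrix.blockDiagonal_apply, hlk]
    rw [this]
    exact TwoSidedIdeal.subset_span ⟨l1, k1, rfl⟩
  · have : nCopies m b (l1, l2) (k1, k2) = 0 := by
      simp [nCopies, Matrix.blockDiagonal_apply, hlk]
    rw [this]
    exact I.zero_mem

end Aux2

/-- `W(A)` is almost unperforated: `n⟨a⟩ ≤ m⟨b⟩` with `n > m` implies `⟨a⟩ ≤ ⟨b⟩`. -/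
def AlmostUnperforated (A : Type*) [NonUnitalCStarAlgebra A] : Prop :=
  ∀ (ι κ : Type) [Fintype ι] [DecidableEq ι] [Fintype κ] [DecidableEq κ]
    (a : Matrix ι ι A) (b : Matrix κ κ A), MatPos a → MatPos b →
    ∀ m n : ℕ, m < n → MCuntzLE (nCopies n a) (nCopies m b) → MCuntzLE a b

/-- Weak strict comparison: whenever `a` lies in the closed ideal generated by `b` and
`d(a) < d(b)` for every dimension function `d` with `d(b) = 1`, then `a ≾ b`. -/
def WeakStrictComparison (A : Type*) [NonUnitalCStarAlgebra A] : Prop :=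
  ∀ (ι κ : Type) [Fintype ι] [Fintype κ] (a : Matrix ι ι A) (b : Matrix κ κ A),
    MatPos a → MatPos b → InClosedIdealGen a b →
    (∀ d : DimFn A, d.d κ b = 1 → d.d ι a < d.d κ b) → MCuntzLE a b

/-- (1) If `W(A)` is almost unperforated and `n⟨a⟩ ≤ m⟨b⟩` with `n > m`, then `a ≾ b`.
(2) Conversely, if `A` has weak strict comparison and every nonzero dimension function on `A` is
strictly positive on nonzero positive elements (e.g. if `A` is simple), then `W(A)` is almost
unperforated. -/
theorem stmt_12 {A : Type*} [NonUnitalCStarAlgebra A] [PartialOrder A] [StarOrderedRing A] :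
    (AlmostUnperforated A →
      ∀ (ι κ : Type) [Fintype ι] [DecidableEq ι] [Fintype κ] [DecidableEq κ]
        (a : Matrix ι ι A) (b : Matrix κ κ A), MatPos a → MatPos b →
        (∃ m n : ℕ, n > m ∧ MCuntzLE (nCopies n a) (nCopies m b)) → MCuntzLE a b) ∧
    (WeakStrictComparison A →
      (∀ d : DimFn A,
        (∃ (ι : Type) (_ : Fintype ι) (a : Matrix ι ι A), MatPos a ∧ d.d ι a ≠ 0) →
        ∀ (ι : Type) [Fintype ι] (a : Matrix ι ι A), MatPos a → a ≠ 0 → 0 < d.d ι a) →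
      AlmostUnperforated A) := by
  constructor
  · intro hAU ι κ _ _ _ _ a b ha hb ⟨m, n, hmn, hle⟩
    exact hAU ι κ a b ha hb m n hmn hle
  · intro hWSC _hpos ι κ _ _ _ _ a b ha hb m n hmn hle
    rcases Nat.eq_zero_or_pos m with hm | hm
    · -- m = 0 : then nCopies n a = 0 hence a = 0, so a ≾ b trivially.
      subst hm
      obtain ⟨v, hv⟩ := hle
      have hzero : (fun p => v p * nCopies 0 b * (v p)ᴴ) = fun _ => (0 : Matrix _ _ A) := by
        funext p
        ext x y
        rw [Matrix.mul_apply]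
        simp
      rw [hzero] at hv
      have hna : nCopies n a = 0 := tendsto_nhds_unique hv tendsto_const_nhds
      have ha0 : a = 0 := by
        ext i j
        have := congrFun (congrFun hna (i, ⟨0, hmn⟩)) (j, ⟨0, hmn⟩)
        simpa [nCopies, Matrix.blockDiagonal_apply] using this
      subst ha0
      exact ⟨fun _ => 0, by
        simp only [Matrix.zero_mul, Matrix.conjTranspose_zero, Matrix.mul_zero]
        exact tendsto_const_nhds⟩
    · -- m ≥ 1
      refine hWSC ι κ a b ha hb (inClosedIdealGen_of_mCuntzLE (lt_trans hm hmn) hle) ?_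
      intro d hdb
      rw [hdb]
      by_contra hcon
      push_neg at hcon
      have hmono : d.d _ (nCopies n a) ≤ d.d _ (nCopies m b) :=
        d.mono _ _ _ _ (matPos_nCopies ha n) (matPos_nCopies hb m) hle
      obtain ⟨n', rfl⟩ : ∃ n', n = n' + 1 := ⟨n - 1, by omega⟩
      obtain ⟨m', rfl⟩ : ∃ m', m = m' + 1 := ⟨m - 1, by omega⟩
      rw [d_nCopies d a ha n', d_nCopies d b hb m', hdb, mul_one] at hmono
      have h1 : ((n' + 1 : ℕ) : ℝ≥0∞) ≤ ((m' + 1 : ℕ) : ℝ≥0∞) := by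
        calc ((n' + 1 : ℕ) : ℝ≥0∞) = ((n' + 1 : ℕ) : ℝ≥0∞) * 1 := (mul_one _).symm
          _ ≤ ((n' + 1 : ℕ) : ℝ≥0∞) * d.d ι a := by gcongr
          _ ≤ ((m' + 1 : ℕ) : ℝ≥0∞) := hmono
      rw [Nat.cast_le] at h1
      omega
end
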